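/- arXiv:2409.07754 — 5 statements merged into one kernel-verified Lean document; each statement's English description precedes it below -/
import Mathlib

section
/- If (a, 𝓜) is a copies-core solution, then its reduction r(a, 𝓜) = (x, M) is a nodes-core solution; that is, M is a B-matching, for every coalition S = S_U ∪ S_V (S_U ⊆ U, S_V ⊆ V) the total allocation ∑_{g∈S} x_g is at least the maximum B-matching value over S, and ∑_{g∈G} x_g equals the maximum B-matching value over G. -/
open Finset

section BMatching

variable {U V : Type*}

/-- A finite set of edges `M ⊆ U × V` is a `B`-matching when every node is incident
to at most its `B`-value many edges. -/
def IsBMatching [DecidableEq U] [DecidableEq V] (BU : U → ℤ) (BV : V → ℤ)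
    (M : Finset (U × V)) : Prop :=
  (∀ u : U, ((M.filter fun e => e.1 = u).card : ℤ) ≤ BU u) ∧
  (∀ v : V, ((M.filter fun e => e.2 = v).card : ℤ) ≤ BV v)

/-- A copy of a node `g` is a pair `(g, k)` with `1 ≤ k ≤ B g`.  A finite set of
edges between copies is a `B`-copies matching when all endpoints are genuine copies,
every copy is incident to at most one edge, and for each node pair `(u, v)` at most
one edge joins a copy of `u` to a copy of `v`. -/
def IsBCopiesMatching (BU : U → ℤ) (BV : V → ℤ)
    (𝓜 : Finset ((U × ℤ) × (V × ℤ))) : Prop :=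
  (∀ e ∈ 𝓜, 1 ≤ e.1.2 ∧ e.1.2 ≤ BU e.1.1 ∧ 1 ≤ e.2.2 ∧ e.2.2 ≤ BV e.2.1) ∧
  (∀ e ∈ 𝓜, ∀ f ∈ 𝓜, e.1 = f.1 → e = f) ∧
  (∀ e ∈ 𝓜, ∀ f ∈ 𝓜, e.2 = f.2 → e = f) ∧
  (∀ e ∈ 𝓜, ∀ f ∈ 𝓜, e.1.1 = f.1.1 → e.2.1 = f.2.1 → e = f)

/-- The reduced (nodes) matching of a copies matching. -/
def reduceMatching [DecidableEq U] [DecidableEq V]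
    (𝓜 : Finset ((U × ℤ) × (V × ℤ))) : Finset (U × V) :=
  𝓜.image fun e => (e.1.1, e.2.1)

/-- A copies allocation is nonnegative on all genuine copies. -/
def AllocNonneg (BU : U → ℤ) (BV : V → ℤ) (aU : U → ℤ → ℚ) (aV : V → ℤ → ℚ) : Prop :=
  (∀ u i, 1 ≤ i → i ≤ BU u → 0 ≤ aU u i) ∧
  (∀ v j, 1 ≤ j → j ≤ BV v → 0 ≤ aV v j)

/-- Edge saturation: matched copies share exactly the weight of their edge. -/
def EdgeSaturation (W : U → V → ℚ) (aU : U → ℤ → ℚ) (aV : V → ℤ → ℚ)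
    (𝓜 : Finset ((U × ℤ) × (V × ℤ))) : Prop :=
  ∀ e ∈ 𝓜, aU e.1.1 e.1.2 + aV e.2.1 e.2.2 = W e.1.1 e.2.1

/-- Stability against pairwise deviation: for every node pair not in the reduced
matching, no pair of copies can jointly gain by matching. -/
def PairwiseStability [DecidableEq U] [DecidableEq V] (W : U → V → ℚ)
    (BU : U → ℤ) (BV : V → ℤ) (aU : U → ℤ → ℚ) (aV : V → ℤ → ℚ)
    (𝓜 : Finset ((U × ℤ) × (V × ℤ))) : Prop :=
  ∀ u v, (u, v) ∉ reduceMatching 𝓜 →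
    ∀ i j, 1 ≤ i → i ≤ BU u → 1 ≤ j → j ≤ BV v → W u v ≤ aU u i + aV v j

/-- Zero-gain for unmatched copies. -/
def ZeroGain (BU : U → ℤ) (BV : V → ℤ) (aU : U → ℤ → ℚ) (aV : V → ℤ → ℚ)
    (𝓜 : Finset ((U × ℤ) × (V × ℤ))) : Prop :=
  (∀ u i, 1 ≤ i → i ≤ BU u → (∀ e ∈ 𝓜, e.1 ≠ (u, i)) → aU u i = 0) ∧
  (∀ v j, 1 ≤ j → j ≤ BV v → (∀ e ∈ 𝓜, e.2 ≠ (v, j)) → aV v j = 0)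

/-- A copies-core solution. -/
def IsCopiesCore [DecidableEq U] [DecidableEq V] (W : U → V → ℚ)
    (BU : U → ℤ) (BV : V → ℤ) (aU : U → ℤ → ℚ) (aV : V → ℤ → ℚ)
    (𝓜 : Finset ((U × ℤ) × (V × ℤ))) : Prop :=
  IsBCopiesMatching BU BV 𝓜 ∧ AllocNonneg BU BV aU aV ∧
  EdgeSaturation W aU aV 𝓜 ∧ PairwiseStability W BU BV aU aV 𝓜 ∧
  ZeroGain BU BV aU aV 𝓜

/-- The node allocation of `u`: total of the allocations of its copies. -/
noncomputable def nodeAlloc (B : ℤ) (a : ℤ → ℚ) : ℚ := ∑ i ∈ Finset.Icc (1 : ℤ) B, a i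

/-- The set of values `∑_{(u,v) ∈ M'} W u v` achieved by `B`-matchings `M'` inside
the coalition `SU ∪ SV`. -/
def matchingValues [DecidableEq U] [DecidableEq V] (W : U → V → ℚ)
    (BU : U → ℤ) (BV : V → ℤ) (SU : Finset U) (SV : Finset V) : Set ℚ :=
  {t | ∃ M' : Finset (U × V), M' ⊆ SU ×ˢ SV ∧ IsBMatching BU BV M' ∧
    t = ∑ e ∈ M', W e.1 e.2}

end BMatching

set_option linter.unusedSectionVars false
section CCHelpers

variable {α : Type*} [DecidableEq α]

lemma cc_image_subset_Icc (B : ℤ) (s : Finset α) (idx : α → ℤ)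
    (hrange : ∀ x ∈ s, 1 ≤ idx x ∧ idx x ≤ B) :
    s.image idx ⊆ Finset.Icc 1 B := by
  intro i hi
  obtain ⟨x, hx, rfl⟩ := Finset.mem_image.mp hi
  exact Finset.mem_Icc.mpr ⟨(hrange x hx).1, (hrange x hx).2⟩

lemma cc_card_Icc (B : ℤ) : (Finset.Icc (1:ℤ) B).card = B.toNat := by
  rw [Int.card_Icc]; omega

lemma cc_side_bound (B : ℤ) (a : ℤ → ℚ) (s : Finset α) (idx : α → ℤ)
    (hrange : ∀ x ∈ s, 1 ≤ idx x ∧ idx x ≤ B)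
    (hinj : ∀ x ∈ s, ∀ y ∈ s, idx x = idx y → x = y)
    (k : ℕ) (hk : s.card + k ≤ B.toNat) (m : ℚ) (hm0 : 0 ≤ m)
    (hmle : ∀ i, 1 ≤ i → i ≤ B → m ≤ a i) :
    (∑ x ∈ s, a (idx x)) + k * m ≤ nodeAlloc B a := by
  have hT := cc_image_subset_Icc B s idx hrange
  have hcardT : (s.image idx).card = s.card := Finset.card_image_of_injOn hinj
  have hsum : ∑ x ∈ s, a (idx x) = ∑ i ∈ s.image idx, a i := (Finset.sum_image hinj).symm
  have hsplit : ∑ i ∈ Finset.Icc (1:ℤ) B \ s.image idx, a i + ∑ i ∈ s.image idx, a i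
      = nodeAlloc B a := Finset.sum_sdiff hT
  have hlow : ((Finset.Icc (1:ℤ) B \ s.image idx).card : ℚ) * m
      ≤ ∑ i ∈ Finset.Icc (1:ℤ) B \ s.image idx, a i := by
    have := Finset.card_nsmul_le_sum (Finset.Icc (1:ℤ) B \ s.image idx) a m
      (fun i hi => by
        have hi' := Finset.mem_Icc.mp (Finset.mem_sdiff.mp hi).1
        exact hmle i hi'.1 hi'.2)
    simpa [nsmul_eq_mul] using this
  have hcard : Finset.card (Finset.Icc (1:ℤ) B \ s.image idx) = B.toNat - s.card := by
    rw [Finset.card_sdiff_of_subset hT, cc_card_Icc, hcardT]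
  have hkm : (k : ℚ) * m ≤ ((Finset.Icc (1:ℤ) B \ s.image idx).card : ℚ) * m := by
    apply mul_le_mul_of_nonneg_right _ hm0
    rw [hcard]
    exact_mod_cast Nat.le_sub_of_add_le (by omega)
  linarith [hsum, hsplit, hlow, hkm]

lemma cc_side_total (B : ℤ) (a : ℤ → ℚ) (s : Finset α) (idx : α → ℤ)
    (hrange : ∀ x ∈ s, 1 ≤ idx x ∧ idx x ≤ B)
    (hinj : ∀ x ∈ s, ∀ y ∈ s, idx x = idx y → x = y)
    (hzero : ∀ i, 1 ≤ i → i ≤ B → (∀ x ∈ s, idx x ≠ i) → a i = 0) :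
    nodeAlloc B a = ∑ x ∈ s, a (idx x) := by
  have hT := cc_image_subset_Icc B s idx hrange
  have hsum : ∑ x ∈ s, a (idx x) = ∑ i ∈ s.image idx, a i := (Finset.sum_image hinj).symm
  have hsplit : ∑ i ∈ Finset.Icc (1:ℤ) B \ s.image idx, a i + ∑ i ∈ s.image idx, a i
      = nodeAlloc B a := Finset.sum_sdiff hT
  have hz : ∑ i ∈ Finset.Icc (1:ℤ) B \ s.image idx, a i = 0 := by
    apply Finset.sum_eq_zero
    intro i hi
    obtain ⟨hi1, hi2⟩ := Finset.mem_sdiff.mp hi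
    have hi' := Finset.mem_Icc.mp hi1
    exact hzero i hi'.1 hi'.2 (fun x hx hxe => hi2 (Finset.mem_image.mpr ⟨x, hx, hxe⟩))
  rw [hsum, ← hsplit, hz, zero_add]

end CCHelpers

variable {U V : Type*} [Fintype U] [Fintype V] [Nonempty U] [Nonempty V]
  [DecidableEq U] [DecidableEq V]

set_option maxHeartbeats 1000000 in
lemma cc_coalition_bound {U V : Type*} [DecidableEq U] [DecidableEq V]
    (W : U → V → ℚ) (BU : U → ℤ) (BV : V → ℤ) (hBU : ∀ u, 1 ≤ BU u) (hBV : ∀ v, 1 ≤ BV v)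
    (aU : U → ℤ → ℚ) (aV : V → ℤ → ℚ) (𝓜 : Finset ((U × ℤ) × (V × ℤ)))
    (hcore : IsCopiesCore W BU BV aU aV 𝓜)
    (SU : Finset U) (SV : Finset V) (M' : Finset (U × V))
    (hsub : M' ⊆ SU ×ˢ SV) (hM' : IsBMatching BU BV M') :
    ∑ e ∈ M', W e.1 e.2
      ≤ ∑ u ∈ SU, nodeAlloc (BU u) (aU u) + ∑ v ∈ SV, nodeAlloc (BV v) (aV v) := by
  classical
  obtain ⟨⟨hcop, hone1, hone2, huniq⟩, ⟨hnnU, hnnV⟩, hsat, hstab, hzero⟩ := hcore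
  set M : Finset (U × V) := reduceMatching 𝓜 with hM
  have hneU : ∀ u : U, (Finset.Icc (1:ℤ) (BU u)).Nonempty :=
    fun u => Finset.nonempty_Icc.mpr (hBU u)
  have hneV : ∀ v : V, (Finset.Icc (1:ℤ) (BV v)).Nonempty :=
    fun v => Finset.nonempty_Icc.mpr (hBV v)
  set mU : U → ℚ := fun u => (Finset.Icc (1:ℤ) (BU u)).inf' (hneU u) (aU u) with hmU
  set mV : V → ℚ := fun v => (Finset.Icc (1:ℤ) (BV v)).inf' (hneV v) (aV v) with hmV
  have hmUle : ∀ u i, 1 ≤ i → i ≤ BU u → mU u ≤ aU u i :=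
    fun u i h1 h2 => Finset.inf'_le _ (Finset.mem_Icc.mpr ⟨h1, h2⟩)
  have hmVle : ∀ v j, 1 ≤ j → j ≤ BV v → mV v ≤ aV v j :=
    fun v j h1 h2 => Finset.inf'_le _ (Finset.mem_Icc.mpr ⟨h1, h2⟩)
  have hmU0 : ∀ u, 0 ≤ mU u := by
    intro u
    obtain ⟨i, hi, hieq⟩ := Finset.exists_mem_eq_inf' (hneU u) (aU u)
    have hi' := Finset.mem_Icc.mp hi
    rw [hmU]
    simp only [hieq]
    exact hnnU u i hi'.1 hi'.2
  have hmV0 : ∀ v, 0 ≤ mV v := by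
    intro v
    obtain ⟨j, hj, hjeq⟩ := Finset.exists_mem_eq_inf' (hneV v) (aV v)
    have hj' := Finset.mem_Icc.mp hj
    rw [hmV]
    simp only [hjeq]
    exact hnnV v j hj'.1 hj'.2
  have hstab' : ∀ u v, (u, v) ∉ M → W u v ≤ mU u + mV v := by
    intro u v huv
    obtain ⟨i, hi, hieq⟩ := Finset.exists_mem_eq_inf' (hneU u) (aU u)
    obtain ⟨j, hj, hjeq⟩ := Finset.exists_mem_eq_inf' (hneV v) (aV v)
    have hi' := Finset.mem_Icc.mp hi
    have hj' := Finset.mem_Icc.mp hj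
    rw [hmU, hmV]
    simp only [hieq, hjeq]
    exact hstab u v huv i j hi'.1 hi'.2 hj'.1 hj'.2
  set 𝒩 : Finset ((U × ℤ) × (V × ℤ)) := 𝓜.filter (fun ε => (ε.1.1, ε.2.1) ∈ M') with h𝒩
  set F : Finset (U × V) := M'.filter (fun e => ¬ e ∈ M) with hF
  set C : Finset (U × V) := M'.filter (fun e => e ∈ M) with hC
  have hsumsplit : ∑ e ∈ C, W e.1 e.2 + ∑ e ∈ F, W e.1 e.2 = ∑ e ∈ M', W e.1 e.2 :=
    Finset.sum_filter_add_sum_filter_not M' (fun e => e ∈ M) _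
  have hinjred : ∀ ε ∈ 𝓜, ∀ φ ∈ 𝓜,
      (ε.1.1, ε.2.1) = (φ.1.1, φ.2.1) → ε = φ := by
    intro ε hε φ hφ h
    simp only [Prod.mk.injEq] at h
    exact huniq ε hε φ hφ h.1 h.2
  have hCim : C = 𝒩.image (fun ε => (ε.1.1, ε.2.1)) := by
    ext e
    simp only [hC, h𝒩, hM, reduceMatching, Finset.mem_filter, Finset.mem_image]
    constructor
    · rintro ⟨heM', ε, hε, hred⟩
      exact ⟨ε, ⟨hε, hred ▸ heM'⟩, hred⟩
    · rintro ⟨ε, ⟨hε, hεM'⟩, rfl⟩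
      exact ⟨hεM', ε, hε, rfl⟩
  have hinj𝒩 : ∀ ε ∈ 𝒩, ∀ φ ∈ 𝒩,
      (ε.1.1, ε.2.1) = (φ.1.1, φ.2.1) → ε = φ :=
    fun ε hε φ hφ h => hinjred ε (Finset.mem_filter.mp hε).1 φ (Finset.mem_filter.mp hφ).1 h
  have hCW : ∑ e ∈ C, W e.1 e.2 = ∑ ε ∈ 𝒩, (aU ε.1.1 ε.1.2 + aV ε.2.1 ε.2.2) := by
    rw [hCim, Finset.sum_image hinj𝒩]
    exact Finset.sum_congr rfl (fun ε hε => (hsat ε (Finset.mem_filter.mp hε).1).symm)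
  have hFW : ∑ e ∈ F, W e.1 e.2 ≤ ∑ e ∈ F, (mU e.1 + mV e.2) := by
    apply Finset.sum_le_sum
    intro e he
    have heM : ¬ e ∈ M := (Finset.mem_filter.mp he).2
    exact hstab' e.1 e.2 (by simpa using heM)
  -- per-node degree bound
  have hkey : ∀ u : U, ((𝒩.filter (fun ε => ε.1.1 = u)).card
      + (F.filter (fun e => e.1 = u)).card : ℤ) ≤ BU u := by
    intro u
    have hCu : (C.filter (fun e => e.1 = u))
        = (𝒩.filter (fun ε => ε.1.1 = u)).image (fun ε => (ε.1.1, ε.2.1)) := by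
      rw [hCim, Finset.filter_image]
    have hCucard : (C.filter (fun e => e.1 = u)).card
        = (𝒩.filter (fun ε => ε.1.1 = u)).card := by
      rw [hCu]
      exact Finset.card_image_of_injOn
        (fun ε hε φ hφ h => hinj𝒩 ε (Finset.mem_filter.mp hε).1 φ (Finset.mem_filter.mp hφ).1 h)
    have hpart : (C.filter (fun e => e.1 = u)).card + (F.filter (fun e => e.1 = u)).card
        = (M'.filter (fun e => e.1 = u)).card := by
      rw [hC, hF, Finset.filter_filter, Finset.filter_filter]
      have := Finset.card_filter_add_card_filter_not
        (s := M'.filter (fun e => e.1 = u)) (p := fun e => e ∈ M)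
      simpa [Finset.filter_filter, and_comm] using this
    have hle : ((M'.filter (fun e => e.1 = u)).card : ℤ) ≤ BU u := hM'.1 u
    omega
  have hkeyV : ∀ v : V, ((𝒩.filter (fun ε => ε.2.1 = v)).card
      + (F.filter (fun e => e.2 = v)).card : ℤ) ≤ BV v := by
    intro v
    have hCv : (C.filter (fun e => e.2 = v))
        = (𝒩.filter (fun ε => ε.2.1 = v)).image (fun ε => (ε.1.1, ε.2.1)) := by
      rw [hCim, Finset.filter_image]
    have hCvcard : (C.filter (fun e => e.2 = v)).card
        = (𝒩.filter (fun ε => ε.2.1 = v)).card := by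
      rw [hCv]
      exact Finset.card_image_of_injOn
        (fun ε hε φ hφ h => hinj𝒩 ε (Finset.mem_filter.mp hε).1 φ (Finset.mem_filter.mp hφ).1 h)
    have hpart : (C.filter (fun e => e.2 = v)).card + (F.filter (fun e => e.2 = v)).card
        = (M'.filter (fun e => e.2 = v)).card := by
      rw [hC, hF, Finset.filter_filter, Finset.filter_filter]
      have := Finset.card_filter_add_card_filter_not
        (s := M'.filter (fun e => e.2 = v)) (p := fun e => e ∈ M)
      simpa [Finset.filter_filter, and_comm] using this
    have hle : ((M'.filter (fun e => e.2 = v)).card : ℤ) ≤ BV v := hM'.2 v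
    omega
  have hUside : ∑ ε ∈ 𝒩, aU ε.1.1 ε.1.2 + ∑ e ∈ F, mU e.1
      ≤ ∑ u ∈ SU, nodeAlloc (BU u) (aU u) := by
    have hmapsN : ∀ ε ∈ 𝒩, ε.1.1 ∈ SU := by
      intro ε hε
      exact (Finset.mem_product.mp (hsub (Finset.mem_filter.mp hε).2)).1
    have hmapsF : ∀ e ∈ F, e.1 ∈ SU := by
      intro e he
      exact (Finset.mem_product.mp (hsub (Finset.mem_filter.mp he).1)).1
    rw [← Finset.sum_fiberwise_of_maps_to hmapsN (fun ε => aU ε.1.1 ε.1.2),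
        ← Finset.sum_fiberwise_of_maps_to hmapsF (fun e => mU e.1),
        ← Finset.sum_add_distrib]
    apply Finset.sum_le_sum
    intro u hu
    have h1 : ∑ ε ∈ 𝒩.filter (fun ε => ε.1.1 = u), aU ε.1.1 ε.1.2
        = ∑ ε ∈ 𝒩.filter (fun ε => ε.1.1 = u), aU u ε.1.2 :=
      Finset.sum_congr rfl (fun ε hε => by rw [(Finset.mem_filter.mp hε).2])
    have h2 : ∑ e ∈ F.filter (fun e => e.1 = u), mU e.1
        = ((F.filter (fun e => e.1 = u)).card : ℚ) * mU u := by
      rw [Finset.sum_congr rfl (fun e he => by rw [(Finset.mem_filter.mp he).2]),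
        Finset.sum_const, nsmul_eq_mul]
    rw [h1, h2]
    have hrange : ∀ ε ∈ 𝒩.filter (fun ε => ε.1.1 = u), 1 ≤ ε.1.2 ∧ ε.1.2 ≤ BU u := by
      intro ε hε
      have hε' := Finset.mem_filter.mp hε
      have hc := hcop ε (Finset.mem_filter.mp hε'.1).1
      exact ⟨hc.1, hε'.2 ▸ hc.2.1⟩
    have hinj : ∀ ε ∈ 𝒩.filter (fun ε => ε.1.1 = u), ∀ φ ∈ 𝒩.filter (fun ε => ε.1.1 = u),
        ε.1.2 = φ.1.2 → ε = φ := by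
      intro ε hε φ hφ h
      have hε' := Finset.mem_filter.mp hε
      have hφ' := Finset.mem_filter.mp hφ
      apply hone1 ε (Finset.mem_filter.mp hε'.1).1 φ (Finset.mem_filter.mp hφ'.1).1
      exact Prod.ext (hε'.2.trans hφ'.2.symm) h
    have hk : (𝒩.filter (fun ε => ε.1.1 = u)).card + (F.filter (fun e => e.1 = u)).card
        ≤ (BU u).toNat := by
      have := hkey u
      omega
    exact cc_side_bound (BU u) (aU u) _ (fun ε => ε.1.2) hrange hinj _ hk (mU u)
      (hmU0 u) (hmUle u)
  have hVside : ∑ ε ∈ 𝒩, aV ε.2.1 ε.2.2 + ∑ e ∈ F, mV e.2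
      ≤ ∑ v ∈ SV, nodeAlloc (BV v) (aV v) := by
    have hmapsN : ∀ ε ∈ 𝒩, ε.2.1 ∈ SV := by
      intro ε hε
      exact (Finset.mem_product.mp (hsub (Finset.mem_filter.mp hε).2)).2
    have hmapsF : ∀ e ∈ F, e.2 ∈ SV := by
      intro e he
      exact (Finset.mem_product.mp (hsub (Finset.mem_filter.mp he).1)).2
    rw [← Finset.sum_fiberwise_of_maps_to hmapsN (fun ε => aV ε.2.1 ε.2.2),
        ← Finset.sum_fiberwise_of_maps_to hmapsF (fun e => mV e.2),
        ← Finset.sum_add_distrib]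
    apply Finset.sum_le_sum
    intro v hv
    have h1 : ∑ ε ∈ 𝒩.filter (fun ε => ε.2.1 = v), aV ε.2.1 ε.2.2
        = ∑ ε ∈ 𝒩.filter (fun ε => ε.2.1 = v), aV v ε.2.2 :=
      Finset.sum_congr rfl (fun ε hε => by rw [(Finset.mem_filter.mp hε).2])
    have h2 : ∑ e ∈ F.filter (fun e => e.2 = v), mV e.2
        = ((F.filter (fun e => e.2 = v)).card : ℚ) * mV v := by
      rw [Finset.sum_congr rfl (fun e he => by rw [(Finset.mem_filter.mp he).2]),
        Finset.sum_const, nsmul_eq_mul]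
    rw [h1, h2]
    have hrange : ∀ ε ∈ 𝒩.filter (fun ε => ε.2.1 = v), 1 ≤ ε.2.2 ∧ ε.2.2 ≤ BV v := by
      intro ε hε
      have hε' := Finset.mem_filter.mp hε
      have hc := hcop ε (Finset.mem_filter.mp hε'.1).1
      exact ⟨hc.2.2.1, hε'.2 ▸ hc.2.2.2⟩
    have hinj : ∀ ε ∈ 𝒩.filter (fun ε => ε.2.1 = v), ∀ φ ∈ 𝒩.filter (fun ε => ε.2.1 = v),
        ε.2.2 = φ.2.2 → ε = φ := by
      intro ε hε φ hφ h
      have hε' := Finset.mem_filter.mp hε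
      have hφ' := Finset.mem_filter.mp hφ
      apply hone2 ε (Finset.mem_filter.mp hε'.1).1 φ (Finset.mem_filter.mp hφ'.1).1
      exact Prod.ext (hε'.2.trans hφ'.2.symm) h
    have hk : (𝒩.filter (fun ε => ε.2.1 = v)).card + (F.filter (fun e => e.2 = v)).card
        ≤ (BV v).toNat := by
      have := hkeyV v
      omega
    exact cc_side_bound (BV v) (aV v) _ (fun ε => ε.2.2) hrange hinj _ hk (mV v)
      (hmV0 v) (hmVle v)
  calc ∑ e ∈ M', W e.1 e.2
      = ∑ e ∈ C, W e.1 e.2 + ∑ e ∈ F, W e.1 e.2 := hsumsplit.symm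
    _ ≤ ∑ ε ∈ 𝒩, (aU ε.1.1 ε.1.2 + aV ε.2.1 ε.2.2) + ∑ e ∈ F, (mU e.1 + mV e.2) := by
        rw [hCW]; exact add_le_add_right hFW _
    _ = (∑ ε ∈ 𝒩, aU ε.1.1 ε.1.2 + ∑ e ∈ F, mU e.1)
        + (∑ ε ∈ 𝒩, aV ε.2.1 ε.2.2 + ∑ e ∈ F, mV e.2) := by
        rw [Finset.sum_add_distrib, Finset.sum_add_distrib]; ring
    _ ≤ _ := add_le_add hUside hVside


/-- If `(a, 𝓜)` is a copies-core solution then its reduction is a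
nodes-core solution: the reduced matching is a `B`-matching, every coalition's total
node allocation is at least the maximum `B`-matching value over that coalition, and
the total node allocation over `G` equals (is the greatest element of the achievable
values, i.e. the maximum `B`-matching value over) `G`. -/
theorem reduction_of_copiesCore_is_nodesCore (W : U → V → ℚ) (hW : ∀ u v, 0 ≤ W u v)
    (BU : U → ℤ) (BV : V → ℤ) (hBU : ∀ u, 1 ≤ BU u) (hBV : ∀ v, 1 ≤ BV v)
    (aU : U → ℤ → ℚ) (aV : V → ℤ → ℚ) (𝓜 : Finset ((U × ℤ) × (V × ℤ)))
    (hcore : IsCopiesCore W BU BV aU aV 𝓜) :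
    IsBMatching BU BV (reduceMatching 𝓜) ∧
    (∀ (SU : Finset U) (SV : Finset V),
      ∀ t ∈ matchingValues W BU BV SU SV,
        t ≤ ∑ u ∈ SU, nodeAlloc (BU u) (aU u) + ∑ v ∈ SV, nodeAlloc (BV v) (aV v)) ∧
    IsGreatest (matchingValues W BU BV Finset.univ Finset.univ)
      (∑ u : U, nodeAlloc (BU u) (aU u) + ∑ v : V, nodeAlloc (BV v) (aV v)) := by
  classical
  obtain ⟨⟨hcop, hone1, hone2, huniq⟩, ⟨hnnU, hnnV⟩, hsat, hstab, hzero⟩ := id hcore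
  have hinjred : ∀ ε ∈ 𝓜, ∀ φ ∈ 𝓜, (ε.1.1, ε.2.1) = (φ.1.1, φ.2.1) → ε = φ := by
    intro ε hε φ hφ h
    simp only [Prod.mk.injEq] at h
    exact huniq ε hε φ hφ h.1 h.2
  have hBmatch : IsBMatching BU BV (reduceMatching 𝓜) := by
    constructor
    · intro u
      have h1 : (reduceMatching 𝓜).filter (fun e => e.1 = u)
          = (𝓜.filter (fun ε => ε.1.1 = u)).image (fun ε => (ε.1.1, ε.2.1)) := by
        rw [reduceMatching, Finset.filter_image]
      rw [h1, Finset.card_image_of_injOn (fun ε hε φ hφ h =>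
        hinjred ε (Finset.mem_filter.mp hε).1 φ (Finset.mem_filter.mp hφ).1 h)]
      have hcard : (𝓜.filter (fun ε => ε.1.1 = u)).card
          ≤ (Finset.Icc (1:ℤ) (BU u)).card := by
        apply Finset.card_le_card_of_injOn (fun ε => ε.1.2)
        · intro ε hε
          have hε' := Finset.mem_filter.mp hε
          have hc := hcop ε hε'.1
          exact Finset.mem_Icc.mpr ⟨hc.1, hε'.2 ▸ hc.2.1⟩
        · intro ε hε φ hφ h
          have hε' := Finset.mem_filter.mp (Finset.mem_coe.mp hε)
          have hφ' := Finset.mem_filter.mp (Finset.mem_coe.mp hφ)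
          apply hone1 ε hε'.1 φ hφ'.1
          exact Prod.ext (hε'.2.trans hφ'.2.symm) h
      rw [cc_card_Icc] at hcard
      have := hBU u
      omega
    · intro v
      have h1 : (reduceMatching 𝓜).filter (fun e => e.2 = v)
          = (𝓜.filter (fun ε => ε.2.1 = v)).image (fun ε => (ε.1.1, ε.2.1)) := by
        rw [reduceMatching, Finset.filter_image]
      rw [h1, Finset.card_image_of_injOn (fun ε hε φ hφ h =>
        hinjred ε (Finset.mem_filter.mp hε).1 φ (Finset.mem_filter.mp hφ).1 h)]
      have hcard : (𝓜.filter (fun ε => ε.2.1 = v)).card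
          ≤ (Finset.Icc (1:ℤ) (BV v)).card := by
        apply Finset.card_le_card_of_injOn (fun ε => ε.2.2)
        · intro ε hε
          have hε' := Finset.mem_filter.mp hε
          have hc := hcop ε hε'.1
          exact Finset.mem_Icc.mpr ⟨hc.2.2.1, hε'.2 ▸ hc.2.2.2⟩
        · intro ε hε φ hφ h
          have hε' := Finset.mem_filter.mp (Finset.mem_coe.mp hε)
          have hφ' := Finset.mem_filter.mp (Finset.mem_coe.mp hφ)
          apply hone2 ε hε'.1 φ hφ'.1
          exact Prod.ext (hε'.2.trans hφ'.2.symm) h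
      rw [cc_card_Icc] at hcard
      have := hBV v
      omega
  have hcoal : ∀ (SU : Finset U) (SV : Finset V),
      ∀ t ∈ matchingValues W BU BV SU SV,
        t ≤ ∑ u ∈ SU, nodeAlloc (BU u) (aU u) + ∑ v ∈ SV, nodeAlloc (BV v) (aV v) := by
    intro SU SV t ht
    obtain ⟨M', hsub, hM', rfl⟩ := ht
    exact cc_coalition_bound W BU BV hBU hBV aU aV 𝓜 hcore SU SV M' hsub hM'
  refine ⟨hBmatch, hcoal, ?_, fun t ht => hcoal Finset.univ Finset.univ t ht⟩
  refine ⟨reduceMatching 𝓜, ?_, hBmatch, ?_⟩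
  · rw [Finset.univ_product_univ]
    exact Finset.subset_univ _
  · have hUeq : ∀ u : U, nodeAlloc (BU u) (aU u)
        = ∑ ε ∈ 𝓜.filter (fun ε => ε.1.1 = u), aU ε.1.1 ε.1.2 := by
      intro u
      rw [cc_side_total (BU u) (aU u) (𝓜.filter (fun ε => ε.1.1 = u)) (fun ε => ε.1.2)
        (fun ε hε => by
          have hε' := Finset.mem_filter.mp hε
          have hc := hcop ε hε'.1
          exact ⟨hc.1, hε'.2 ▸ hc.2.1⟩)
        (fun ε hε φ hφ h => by
          have hε' := Finset.mem_filter.mp hε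
          have hφ' := Finset.mem_filter.mp hφ
          exact hone1 ε hε'.1 φ hφ'.1 (Prod.ext (hε'.2.trans hφ'.2.symm) h))
        (fun i h1 h2 hno => hzero.1 u i h1 h2 (fun ε hε heq => by
          obtain ⟨ha, hb⟩ := Prod.ext_iff.mp heq
          exact hno ε (Finset.mem_filter.mpr ⟨hε, ha⟩) hb))]
      exact (Finset.sum_congr rfl (fun ε hε => by
        rw [(Finset.mem_filter.mp hε).2])).symm
    have hVeq : ∀ v : V, nodeAlloc (BV v) (aV v)
        = ∑ ε ∈ 𝓜.filter (fun ε => ε.2.1 = v), aV ε.2.1 ε.2.2 := by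
      intro v
      rw [cc_side_total (BV v) (aV v) (𝓜.filter (fun ε => ε.2.1 = v)) (fun ε => ε.2.2)
        (fun ε hε => by
          have hε' := Finset.mem_filter.mp hε
          have hc := hcop ε hε'.1
          exact ⟨hc.2.2.1, hε'.2 ▸ hc.2.2.2⟩)
        (fun ε hε φ hφ h => by
          have hε' := Finset.mem_filter.mp hε
          have hφ' := Finset.mem_filter.mp hφ
          exact hone2 ε hε'.1 φ hφ'.1 (Prod.ext (hε'.2.trans hφ'.2.symm) h))
        (fun j h1 h2 hno => hzero.2 v j h1 h2 (fun ε hε heq => by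
          obtain ⟨ha, hb⟩ := Prod.ext_iff.mp heq
          exact hno ε (Finset.mem_filter.mpr ⟨hε, ha⟩) hb))]
      exact (Finset.sum_congr rfl (fun ε hε => by
        rw [(Finset.mem_filter.mp hε).2])).symm
    have hU : ∑ u : U, nodeAlloc (BU u) (aU u) = ∑ ε ∈ 𝓜, aU ε.1.1 ε.1.2 := by
      rw [← Finset.sum_fiberwise_of_maps_to (fun ε (_ : ε ∈ 𝓜) => Finset.mem_univ ε.1.1)
        (fun ε => aU ε.1.1 ε.1.2)]
      exact Finset.sum_congr rfl (fun u _ => hUeq u)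
    have hV : ∑ v : V, nodeAlloc (BV v) (aV v) = ∑ ε ∈ 𝓜, aV ε.2.1 ε.2.2 := by
      rw [← Finset.sum_fiberwise_of_maps_to (fun ε (_ : ε ∈ 𝓜) => Finset.mem_univ ε.2.1)
        (fun ε => aV ε.2.1 ε.2.2)]
      exact Finset.sum_congr rfl (fun v _ => hVeq v)
    have hWsum : ∑ e ∈ reduceMatching 𝓜, W e.1 e.2
        = ∑ ε ∈ 𝓜, (aU ε.1.1 ε.1.2 + aV ε.2.1 ε.2.2) := by
      rw [reduceMatching, Finset.sum_image hinjred]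
      exact Finset.sum_congr rfl (fun ε hε => (hsat ε hε).symm)
    rw [hU, hV, hWsum, Finset.sum_add_distrib]
end

section
/- Let 𝓜 be a B-copies matching and a a copies allocation satisfying edge saturation and stability against pairwise deviation. Then for every coalition S = S_U ∪ S_V (S_U ⊆ U, S_V ⊆ V), the sum of the allocations of all copies of nodes in S, ∑_{g∈S} ∑_{k=1}^{B(g)} a_{g,k}, is at least the maximum B-matching value over S. -/
open Finset

section Aux

variable {α β : Type*}

lemma aux_exists_injOn_of_card_le [DecidableEq α] [DecidableEq β] [Nonempty β]
    (s : Finset α) (T : Finset β) (h : s.card ≤ T.card) :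
    ∃ g : α → β, Set.InjOn g s ∧ ∀ a ∈ s, g a ∈ T := by
  classical
  induction s using Finset.induction_on generalizing T with
  | empty =>
    exact ⟨fun _ => Classical.arbitrary β, by simp, by simp⟩
  | @insert a s ha ih =>
    rw [Finset.card_insert_of_notMem ha] at h
    obtain ⟨g, hg, hgT⟩ := ih T (by omega)
    have himg : s.image g ⊆ T := by
      intro b hb; obtain ⟨x, hx, rfl⟩ := Finset.mem_image.1 hb; exact hgT x hx
    have hne : (T \ s.image g).Nonempty := by
      rw [← Finset.card_pos, Finset.card_sdiff_of_subset himg]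
      have := Finset.card_image_le (s := s) (f := g)
      omega
    obtain ⟨b, hb⟩ := hne
    rw [Finset.mem_sdiff] at hb
    refine ⟨Function.update g a b, ?_, ?_⟩
    · intro x hx y hy hxy
      simp only [Finset.coe_insert, Set.mem_insert_iff, Finset.mem_coe] at hx hy
      rcases hx with rfl | hx
      · rcases hy with rfl | hy
        · rfl
        · exfalso
          rw [Function.update_self, Function.update_of_ne (by rintro rfl; exact ha hy)] at hxy
          exact hb.2 (Finset.mem_image.2 ⟨y, hy, hxy.symm⟩)
      · rcases hy with rfl | hy
        · exfalso
          rw [Function.update_self, Function.update_of_ne (by rintro rfl; exact ha hx)] at hxy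
          exact hb.2 (Finset.mem_image.2 ⟨x, hx, hxy⟩)
        · rw [Function.update_of_ne (by rintro rfl; exact ha hx),
            Function.update_of_ne (by rintro rfl; exact ha hy)] at hxy
          exact hg hx hy hxy
    · intro x hx
      rcases Finset.mem_insert.1 hx with rfl | hxs
      · rw [Function.update_self]; exact hb.1
      · rw [Function.update_of_ne (by rintro rfl; exact ha hxs)]; exact hgT x hxs

lemma aux_exists_injOn_extend [DecidableEq α] [DecidableEq β] [Nonempty β]
    (t s : Finset α) (hts : t ⊆ s) (T : Finset β) (f : α → β)
    (hf : Set.InjOn f t) (hfT : ∀ a ∈ t, f a ∈ T) (h : s.card ≤ T.card) :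
    ∃ g : α → β, Set.InjOn g s ∧ (∀ a ∈ t, g a = f a) ∧ ∀ a ∈ s, g a ∈ T := by
  classical
  have himg : t.image f ⊆ T := by
    intro b hb; obtain ⟨x, hx, rfl⟩ := Finset.mem_image.1 hb; exact hfT x hx
  have hcard : (s \ t).card ≤ (T \ t.image f).card := by
    rw [Finset.card_sdiff_of_subset hts, Finset.card_sdiff_of_subset himg,
      Finset.card_image_of_injOn hf]
    have := Finset.card_le_card hts
    omega
  obtain ⟨g0, hg0, hg0T⟩ := aux_exists_injOn_of_card_le (s \ t) (T \ t.image f) hcard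
  refine ⟨fun a => if a ∈ t then f a else g0 a, ?_, ?_, ?_⟩
  · intro x hx y hy hxy
    simp only at hxy
    by_cases hxt : x ∈ t <;> by_cases hyt : y ∈ t
    · rw [if_pos hxt, if_pos hyt] at hxy; exact hf hxt hyt hxy
    · exfalso
      rw [if_pos hxt, if_neg hyt] at hxy
      have hy' : y ∈ s \ t := Finset.mem_sdiff.2 ⟨hy, hyt⟩
      have := hg0T y hy'
      rw [Finset.mem_sdiff] at this
      exact this.2 (Finset.mem_image.2 ⟨x, hxt, hxy⟩)
    · exfalso
      rw [if_neg hxt, if_pos hyt] at hxy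
      have hx' : x ∈ s \ t := Finset.mem_sdiff.2 ⟨hx, hxt⟩
      have := hg0T x hx'
      rw [Finset.mem_sdiff] at this
      exact this.2 (Finset.mem_image.2 ⟨y, hyt, hxy.symm⟩)
    · rw [if_neg hxt, if_neg hyt] at hxy
      exact hg0 (Finset.mem_coe.2 (Finset.mem_sdiff.2 ⟨Finset.mem_coe.1 hx, hxt⟩))
        (Finset.mem_coe.2 (Finset.mem_sdiff.2 ⟨Finset.mem_coe.1 hy, hyt⟩)) hxy
  · intro a hat; simp [hat]
  · intro a has
    by_cases hat : a ∈ t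
    · simpa [hat] using hfT a hat
    · have := hg0T a (Finset.mem_sdiff.2 ⟨has, hat⟩)
      rw [Finset.mem_sdiff] at this
      simpa [hat] using this.1

end Aux

variable {U V : Type*} [Fintype U] [Fintype V] [Nonempty U] [Nonempty V]
  [DecidableEq U] [DecidableEq V]

/-- Under edge saturation and stability against pairwise deviation,
for every coalition `SU ∪ SV` the total allocation of all copies of nodes of the
coalition is at least the maximum `B`-matching value over the coalition. -/
theorem coalition_bound_of_saturation_and_stability (W : U → V → ℚ) (hW : ∀ u v, 0 ≤ W u v)
    (BU : U → ℤ) (BV : V → ℤ) (hBU : ∀ u, 1 ≤ BU u) (hBV : ∀ v, 1 ≤ BV v)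
    (aU : U → ℤ → ℚ) (aV : V → ℤ → ℚ) (𝓜 : Finset ((U × ℤ) × (V × ℤ)))
    (h𝓜 : IsBCopiesMatching BU BV 𝓜)
    (hnn : AllocNonneg BU BV aU aV)
    (hsat : EdgeSaturation W aU aV 𝓜)
    (hstab : PairwiseStability W BU BV aU aV 𝓜) :
    ∀ (SU : Finset U) (SV : Finset V),
      ∀ t ∈ matchingValues W BU BV SU SV,
        t ≤ ∑ u ∈ SU, nodeAlloc (BU u) (aU u) + ∑ v ∈ SV, nodeAlloc (BV v) (aV v) := by
  classical
  obtain ⟨h1, h2, h3, h4⟩ := h𝓜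
  intro SU SV t ht
  obtain ⟨M', hsub, ⟨hMU, hMV⟩, rfl⟩ := ht
  -- a selector for the unique matched copies-edge above a reduced edge
  have hmEex : ∀ u v, (u, v) ∈ reduceMatching 𝓜 →
      ∃ e, e ∈ 𝓜 ∧ e.1.1 = u ∧ e.2.1 = v := by
    intro u v huv
    simp only [reduceMatching, Finset.mem_image] at huv
    obtain ⟨e, he, heq⟩ := huv
    exact ⟨e, he, congrArg Prod.fst heq, congrArg Prod.snd heq⟩
  choose mE hmE1 hmE2 hmE3 using hmEex
  -- copy assignments on the U side
  have hU : ∀ u : U, ∃ g : V → ℤ,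
      Set.InjOn g ((M'.filter fun e => e.1 = u).image Prod.snd) ∧
      (∀ v ∈ (M'.filter fun e => e.1 = u).image Prod.snd,
        ∀ h : (u, v) ∈ reduceMatching 𝓜, g v = (mE u v h).1.2) ∧
      (∀ v ∈ (M'.filter fun e => e.1 = u).image Prod.snd,
        g v ∈ Finset.Icc (1 : ℤ) (BU u)) := by
    intro u
    set Su := (M'.filter fun e => e.1 = u).image Prod.snd with hSu
    set tu := Su.filter (fun v => (u, v) ∈ reduceMatching 𝓜) with htu
    set f : V → ℤ := fun v =>
      if h : (u, v) ∈ reduceMatching 𝓜 then (mE u v h).1.2 else 0 with hfdef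
    have hfinj : Set.InjOn f tu := by
      intro v hv v' hv' hvv'
      have hv1 := (Finset.mem_filter.1 (Finset.mem_coe.1 hv)).2
      have hv'1 := (Finset.mem_filter.1 (Finset.mem_coe.1 hv')).2
      rw [hfdef] at hvv'
      simp only [dif_pos hv1, dif_pos hv'1] at hvv'
      have he1 : (mE u v hv1).1 = (mE u v' hv'1).1 :=
        Prod.ext (by rw [hmE2, hmE2]) hvv'
      have := h2 _ (hmE1 u v hv1) _ (hmE1 u v' hv'1) he1
      rw [← hmE3 u v hv1, ← hmE3 u v' hv'1, this]
    have hfT : ∀ v ∈ tu, f v ∈ Finset.Icc (1 : ℤ) (BU u) := by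
      intro v hv
      have hv1 := (Finset.mem_filter.1 hv).2
      rw [hfdef]
      simp only [dif_pos hv1]
      have := h1 _ (hmE1 u v hv1)
      rw [hmE2 u v hv1] at this
      exact Finset.mem_Icc.2 ⟨this.1, this.2.1⟩
    have hcard : Su.card ≤ (Finset.Icc (1 : ℤ) (BU u)).card := by
      rw [Int.card_Icc]
      have h1' : Su.card ≤ (M'.filter fun e => e.1 = u).card := Finset.card_image_le
      have h2' := hMU u
      omega
    obtain ⟨g, hg1, hg2, hg3⟩ := aux_exists_injOn_extend tu Su
      (Finset.filter_subset _ _) _ f hfinj hfT hcard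
    refine ⟨g, hg1, ?_, hg3⟩
    intro v hv h
    rw [hg2 v (Finset.mem_filter.2 ⟨hv, h⟩), hfdef]
    simp only [dif_pos h]
  -- copy assignments on the V side
  have hV : ∀ v : V, ∃ g : U → ℤ,
      Set.InjOn g ((M'.filter fun e => e.2 = v).image Prod.fst) ∧
      (∀ u ∈ (M'.filter fun e => e.2 = v).image Prod.fst,
        ∀ h : (u, v) ∈ reduceMatching 𝓜, g u = (mE u v h).2.2) ∧
      (∀ u ∈ (M'.filter fun e => e.2 = v).image Prod.fst,
        g u ∈ Finset.Icc (1 : ℤ) (BV v)) := by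
    intro v
    set Sv := (M'.filter fun e => e.2 = v).image Prod.fst with hSv
    set tv := Sv.filter (fun u => (u, v) ∈ reduceMatching 𝓜) with htv
    set f : U → ℤ := fun u =>
      if h : (u, v) ∈ reduceMatching 𝓜 then (mE u v h).2.2 else 0 with hfdef
    have hfinj : Set.InjOn f tv := by
      intro u hu u' hu' huu'
      have hu1 := (Finset.mem_filter.1 (Finset.mem_coe.1 hu)).2
      have hu'1 := (Finset.mem_filter.1 (Finset.mem_coe.1 hu')).2
      rw [hfdef] at huu'
      simp only [dif_pos hu1, dif_pos hu'1] at huu'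
      have he2 : (mE u v hu1).2 = (mE u' v hu'1).2 :=
        Prod.ext (by rw [hmE3, hmE3]) huu'
      have := h3 _ (hmE1 u v hu1) _ (hmE1 u' v hu'1) he2
      rw [← hmE2 u v hu1, ← hmE2 u' v hu'1, this]
    have hfT : ∀ u ∈ tv, f u ∈ Finset.Icc (1 : ℤ) (BV v) := by
      intro u hu
      have hu1 := (Finset.mem_filter.1 hu).2
      rw [hfdef]
      simp only [dif_pos hu1]
      have := h1 _ (hmE1 u v hu1)
      rw [hmE3 u v hu1] at this
      exact Finset.mem_Icc.2 ⟨this.2.2.1, this.2.2.2⟩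
    have hcard : Sv.card ≤ (Finset.Icc (1 : ℤ) (BV v)).card := by
      rw [Int.card_Icc]
      have h1' : Sv.card ≤ (M'.filter fun e => e.2 = v).card := Finset.card_image_le
      have h2' := hMV v
      omega
    obtain ⟨g, hg1, hg2, hg3⟩ := aux_exists_injOn_extend tv Sv
      (Finset.filter_subset _ _) _ f hfinj hfT hcard
    refine ⟨g, hg1, ?_, hg3⟩
    intro u hu h
    rw [hg2 u (Finset.mem_filter.2 ⟨hu, h⟩), hfdef]
    simp only [dif_pos h]
  choose gU hgU1 hgU2 hgU3 using hU
  choose gV hgV1 hgV2 hgV3 using hV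
  -- per edge bound
  have key : ∀ e ∈ M', W e.1 e.2 ≤ aU e.1 (gU e.1 e.2) + aV e.2 (gV e.2 e.1) := by
    rintro ⟨u, v⟩ he
    have hvSu : v ∈ (M'.filter fun e => e.1 = u).image Prod.snd :=
      Finset.mem_image.2 ⟨(u, v), Finset.mem_filter.2 ⟨he, rfl⟩, rfl⟩
    have huSv : u ∈ (M'.filter fun e => e.2 = v).image Prod.fst :=
      Finset.mem_image.2 ⟨(u, v), Finset.mem_filter.2 ⟨he, rfl⟩, rfl⟩
    by_cases h : (u, v) ∈ reduceMatching 𝓜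
    · rw [hgU2 u v hvSu h, hgV2 v u huSv h]
      have hs := hsat _ (hmE1 u v h)
      rw [hmE2 u v h, hmE3 u v h] at hs
      exact le_of_eq hs.symm
    · have hiU := Finset.mem_Icc.1 (hgU3 u v hvSu)
      have hiV := Finset.mem_Icc.1 (hgV3 v u huSv)
      exact hstab u v h _ _ hiU.1 hiU.2 hiV.1 hiV.2
  have hsplit : ∑ e ∈ M', W e.1 e.2 ≤
      ∑ e ∈ M', aU e.1 (gU e.1 e.2) + ∑ e ∈ M', aV e.2 (gV e.2 e.1) := by
    rw [← Finset.sum_add_distrib]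
    exact Finset.sum_le_sum key
  refine hsplit.trans (add_le_add ?_ ?_)
  · -- U side
    have hfib : ∑ e ∈ M', aU e.1 (gU e.1 e.2) =
        ∑ u ∈ SU, ∑ e ∈ M'.filter (fun e => e.1 = u), aU e.1 (gU e.1 e.2) :=
      (Finset.sum_fiberwise_of_maps_to
        (fun e he => (Finset.mem_product.1 (hsub he)).1) _).symm
    rw [hfib]
    refine Finset.sum_le_sum ?_
    intro u _
    have hinner : ∑ e ∈ M'.filter (fun e => e.1 = u), aU e.1 (gU e.1 e.2) =
        ∑ v ∈ (M'.filter fun e => e.1 = u).image Prod.snd, aU u (gU u v) := by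
      rw [Finset.sum_image (fun e he e' he' hee' => by
        have h1e := (Finset.mem_filter.1 he).2
        have h1e' := (Finset.mem_filter.1 he').2
        exact Prod.ext (h1e.trans h1e'.symm) hee')]
      refine Finset.sum_congr rfl ?_
      intro e he
      rw [(Finset.mem_filter.1 he).2]
    rw [hinner]
    have himg : ∑ v ∈ (M'.filter fun e => e.1 = u).image Prod.snd, aU u (gU u v) =
        ∑ i ∈ ((M'.filter fun e => e.1 = u).image Prod.snd).image (gU u), aU u i := by
      rw [Finset.sum_image (fun v hv v' hv' h => hgU1 u hv hv' h)]
    rw [himg, nodeAlloc]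
    refine Finset.sum_le_sum_of_subset_of_nonneg ?_ ?_
    · intro i hi
      obtain ⟨v, hv, rfl⟩ := Finset.mem_image.1 hi
      exact hgU3 u v hv
    · intro i hi _
      have := Finset.mem_Icc.1 hi
      exact (hnn.1) u i this.1 this.2
  · -- V side
    have hfib : ∑ e ∈ M', aV e.2 (gV e.2 e.1) =
        ∑ v ∈ SV, ∑ e ∈ M'.filter (fun e => e.2 = v), aV e.2 (gV e.2 e.1) :=
      (Finset.sum_fiberwise_of_maps_to
        (fun e he => (Finset.mem_product.1 (hsub he)).2) _).symm
    rw [hfib]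
    refine Finset.sum_le_sum ?_
    intro v _
    have hinner : ∑ e ∈ M'.filter (fun e => e.2 = v), aV e.2 (gV e.2 e.1) =
        ∑ u ∈ (M'.filter fun e => e.2 = v).image Prod.fst, aV v (gV v u) := by
      rw [Finset.sum_image (fun e he e' he' hee' => by
        have h1e := (Finset.mem_filter.1 he).2
        have h1e' := (Finset.mem_filter.1 he').2
        exact Prod.ext hee' (h1e.trans h1e'.symm))]
      refine Finset.sum_congr rfl ?_
      intro e he
      rw [(Finset.mem_filter.1 he).2]
    rw [hinner]
    have himg : ∑ u ∈ (M'.filter fun e => e.2 = v).image Prod.fst, aV v (gV v u) =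
        ∑ j ∈ ((M'.filter fun e => e.2 = v).image Prod.fst).image (gV v), aV v j := by
      rw [Finset.sum_image (fun u hu u' hu' h => hgV1 v hu hu' h)]
    rw [himg, nodeAlloc]
    refine Finset.sum_le_sum_of_subset_of_nonneg ?_ ?_
    · intro j hj
      obtain ⟨u, hu, rfl⟩ := Finset.mem_image.1 hj
      exact hgV3 v u hu
    · intro j hj _
      have := Finset.mem_Icc.1 hj
      exact (hnn.2) v j this.1 this.2
end

section
/- If (a, 𝓜) is a copies-core solution, then the reduced matching M = {(u,v) ∈ E : (u_i,v_j) ∈ 𝓜 for some i,j} is a maximum B-matching over G: ∑_{(u,v)∈M} W(u,v) equals the maximum of ∑_{(u,v)∈M'} W(u,v) over all B-matchings M' ⊆ E. -/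
open Finset

/-- Sum over a set indexed injectively into the copy interval, where unused copies
vanish, equals the full copy sum. -/
lemma sum_copies_aux {α : Type*} [DecidableEq α] (s : Finset α) (idx : α → ℤ) (a : ℤ → ℚ) (B : ℤ)
    (hinj : ∀ e ∈ s, ∀ f ∈ s, idx e = idx f → e = f)
    (hsub : ∀ e ∈ s, idx e ∈ Finset.Icc (1 : ℤ) B)
    (hzero : ∀ i ∈ Finset.Icc (1 : ℤ) B, (∀ e ∈ s, idx e ≠ i) → a i = 0) :
    ∑ e ∈ s, a (idx e) = ∑ i ∈ Finset.Icc (1 : ℤ) B, a i := by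
  have himg := Finset.sum_image (f := a) (g := idx) hinj
  rw [← himg]
  apply Finset.sum_subset
  · intro i hi
    obtain ⟨e, he, rfl⟩ := Finset.mem_image.mp hi
    exact hsub e he
  · intro i hi hni
    refine hzero i hi fun e he hei => hni ?_
    exact Finset.mem_image.mpr ⟨e, he, hei⟩

/-- Node-wise bound: contributions of incident edges are bounded by the full copy sum. -/
lemma node_bound_aux {α : Type*} [DecidableEq α] (s : Finset α) (p : α → Prop)
    [DecidablePred p] (f : α → ℚ) (a : ℤ → ℚ) (B : ℤ) (m : ℚ) (idx : α → ℤ)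
    (hm0 : 0 ≤ m) (hma : ∀ i ∈ Finset.Icc (1 : ℤ) B, m ≤ a i)
    (hidx : ∀ e ∈ s.filter p, idx e ∈ Finset.Icc (1 : ℤ) B)
    (hinj : ∀ e ∈ s.filter p, ∀ g ∈ s.filter p, idx e = idx g → e = g)
    (hf1 : ∀ e ∈ s.filter p, f e = a (idx e))
    (hf2 : ∀ e ∈ s, ¬ p e → f e = m)
    (hcard : (s.card : ℤ) ≤ B) :
    ∑ e ∈ s, f e ≤ ∑ i ∈ Finset.Icc (1 : ℤ) B, a i := by
  classical
  set F := s.filter p with hF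
  set I := F.image idx with hI
  have hIsub : I ⊆ Finset.Icc (1 : ℤ) B := by
    intro i hi; obtain ⟨e, he, rfl⟩ := Finset.mem_image.mp hi; exact hidx e he
  have hsplit : ∑ e ∈ s, f e = ∑ e ∈ F, f e + ∑ e ∈ s.filter (fun e => ¬ p e), f e :=
    (Finset.sum_filter_add_sum_filter_not s p f).symm
  have hFsum : ∑ e ∈ F, f e = ∑ i ∈ I, a i := by
    rw [hI, Finset.sum_image hinj]
    exact Finset.sum_congr rfl hf1
  have hNsum : ∑ e ∈ s.filter (fun e => ¬ p e), f e
      = ((s.filter (fun e => ¬ p e)).card : ℚ) * m := by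
    rw [Finset.sum_congr rfl (fun e he => hf2 e (Finset.mem_filter.mp he).1
      (Finset.mem_filter.mp he).2)]
    simp [mul_comm]
  have hcardI : I.card = F.card := Finset.card_image_of_injOn fun e he g hg h =>
    hinj e he g hg h
  have hcards : F.card + (s.filter (fun e => ¬ p e)).card = s.card :=
    Finset.card_filter_add_card_filter_not p
  have hIccB : (Finset.Icc (1 : ℤ) B).card = B.toNat := by
    rw [Int.card_Icc]; omega
  have hcard2 : (s.filter (fun e => ¬ p e)).card ≤ ((Finset.Icc (1 : ℤ) B) \ I).card := by
    rw [Finset.card_sdiff_of_subset hIsub, hIccB, hcardI]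
    have hFle : F.card ≤ B.toNat := by
      calc F.card ≤ s.card := Finset.card_filter_le _ _
        _ ≤ B.toNat := by omega
    omega
  have hrest : ((s.filter (fun e => ¬ p e)).card : ℚ) * m
      ≤ ∑ i ∈ (Finset.Icc (1 : ℤ) B) \ I, a i := by
    calc ((s.filter (fun e => ¬ p e)).card : ℚ) * m
        ≤ (((Finset.Icc (1 : ℤ) B) \ I).card : ℚ) * m := by
          apply mul_le_mul_of_nonneg_right _ hm0
          exact_mod_cast hcard2
      _ = ∑ i ∈ (Finset.Icc (1 : ℤ) B) \ I, m := by simp [mul_comm]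
      _ ≤ ∑ i ∈ (Finset.Icc (1 : ℤ) B) \ I, a i :=
          Finset.sum_le_sum fun i hi => hma i (Finset.mem_sdiff.mp hi).1
  have hdecomp : ∑ i ∈ Finset.Icc (1 : ℤ) B, a i
      = ∑ i ∈ (Finset.Icc (1 : ℤ) B) \ I, a i + ∑ i ∈ I, a i :=
    (Finset.sum_sdiff hIsub).symm
  rw [hsplit, hFsum, hNsum, hdecomp]
  linarith


variable {U V : Type*} [Fintype U] [Fintype V] [Nonempty U] [Nonempty V]
  [DecidableEq U] [DecidableEq V]

/-- If `(a, 𝓜)` is a copies-core solution then the reduced matching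
is a maximum `B`-matching over `G`: its weight is the greatest achievable
`B`-matching value. -/
theorem reduced_matching_is_max_of_copiesCore (W : U → V → ℚ) (hW : ∀ u v, 0 ≤ W u v)
    (BU : U → ℤ) (BV : V → ℤ) (hBU : ∀ u, 1 ≤ BU u) (hBV : ∀ v, 1 ≤ BV v)
    (aU : U → ℤ → ℚ) (aV : V → ℤ → ℚ) (𝓜 : Finset ((U × ℤ) × (V × ℤ)))
    (hcore : IsCopiesCore W BU BV aU aV 𝓜) :
    IsGreatest (matchingValues W BU BV Finset.univ Finset.univ)
      (∑ e ∈ reduceMatching 𝓜, W e.1 e.2) := by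
  classical
  obtain ⟨⟨h1, h2, h3, h4⟩, ⟨hnU, hnV⟩, hsat, hstab, ⟨hzU, hzV⟩⟩ := hcore
  set M : Finset (U × V) := reduceMatching 𝓜 with hMdef
  -- the reduced matching is a B-matching
  have hredU : ∀ u : U, ((M.filter fun e => e.1 = u).card : ℤ) ≤ BU u := by
    intro u
    have himg : M.filter (fun e => e.1 = u)
        = (𝓜.filter fun e => e.1.1 = u).image (fun e => (e.1.1, e.2.1)) := by
      rw [hMdef, reduceMatching, Finset.filter_image]
    have hc1 : (M.filter fun e => e.1 = u).card ≤ (𝓜.filter fun e => e.1.1 = u).card := by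
      rw [himg]; exact Finset.card_image_le
    have hc2 : (𝓜.filter fun e => e.1.1 = u).card ≤ (Finset.Icc (1 : ℤ) (BU u)).card := by
      apply Finset.card_le_card_of_injOn (fun e => e.1.2)
      · intro e he
        obtain ⟨heM, heu⟩ := Finset.mem_filter.mp he
        obtain ⟨a1, a2, _, _⟩ := h1 e heM
        simp only [Finset.mem_coe, Finset.mem_Icc]
        exact ⟨a1, heu ▸ a2⟩
      · intro e he f hf hef
        simp only [Finset.coe_filter, Set.mem_setOf_eq] at he hf
        exact h2 e he.1 f hf.1 (Prod.ext (he.2.trans hf.2.symm) hef)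
    have hIcc : ((Finset.Icc (1 : ℤ) (BU u)).card : ℤ) = BU u := by
      rw [Int.card_Icc]; have := hBU u; omega
    have := hc1.trans hc2
    omega
  have hredV : ∀ v : V, ((M.filter fun e => e.2 = v).card : ℤ) ≤ BV v := by
    intro v
    have himg : M.filter (fun e => e.2 = v)
        = (𝓜.filter fun e => e.2.1 = v).image (fun e => (e.1.1, e.2.1)) := by
      rw [hMdef, reduceMatching, Finset.filter_image]
    have hc1 : (M.filter fun e => e.2 = v).card ≤ (𝓜.filter fun e => e.2.1 = v).card := by
      rw [himg]; exact Finset.card_image_le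
    have hc2 : (𝓜.filter fun e => e.2.1 = v).card ≤ (Finset.Icc (1 : ℤ) (BV v)).card := by
      apply Finset.card_le_card_of_injOn (fun e => e.2.2)
      · intro e he
        obtain ⟨heM, hev⟩ := Finset.mem_filter.mp he
        obtain ⟨_, _, a3, a4⟩ := h1 e heM
        simp only [Finset.mem_coe, Finset.mem_Icc]
        exact ⟨a3, hev ▸ a4⟩
      · intro e he f hf hef
        simp only [Finset.coe_filter, Set.mem_setOf_eq] at he hf
        exact h3 e he.1 f hf.1 (Prod.ext (he.2.trans hf.2.symm) hef)
    have hIcc : ((Finset.Icc (1 : ℤ) (BV v)).card : ℤ) = BV v := by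
      rw [Int.card_Icc]; have := hBV v; omega
    have := hc1.trans hc2
    omega
  -- total value equals total allocation
  have hAU : ∀ u : U, ∑ e ∈ 𝓜.filter (fun e => e.1.1 = u), aU e.1.1 e.1.2
      = ∑ i ∈ Finset.Icc (1 : ℤ) (BU u), aU u i := by
    intro u
    have hcg : ∑ e ∈ 𝓜.filter (fun e => e.1.1 = u), aU e.1.1 e.1.2
        = ∑ e ∈ 𝓜.filter (fun e => e.1.1 = u), aU u e.1.2 :=
      Finset.sum_congr rfl fun e he => by rw [(Finset.mem_filter.mp he).2]
    rw [hcg]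
    apply sum_copies_aux
    · intro e he f hf hef
      obtain ⟨heM, heu⟩ := Finset.mem_filter.mp he
      obtain ⟨hfM, hfu⟩ := Finset.mem_filter.mp hf
      exact h2 e heM f hfM (Prod.ext (heu.trans hfu.symm) hef)
    · intro e he
      obtain ⟨heM, heu⟩ := Finset.mem_filter.mp he
      obtain ⟨a1, a2, _, _⟩ := h1 e heM
      simp only [Finset.mem_Icc]
      exact ⟨a1, heu ▸ a2⟩
    · intro i hi hni
      obtain ⟨hi1, hi2⟩ := Finset.mem_Icc.mp hi
      refine hzU u i hi1 hi2 fun e he hei => ?_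
      have heu : e.1.1 = u := by rw [hei]
      exact hni e (Finset.mem_filter.mpr ⟨he, heu⟩) (by rw [hei])
  have hAV : ∀ v : V, ∑ e ∈ 𝓜.filter (fun e => e.2.1 = v), aV e.2.1 e.2.2
      = ∑ j ∈ Finset.Icc (1 : ℤ) (BV v), aV v j := by
    intro v
    have hcg : ∑ e ∈ 𝓜.filter (fun e => e.2.1 = v), aV e.2.1 e.2.2
        = ∑ e ∈ 𝓜.filter (fun e => e.2.1 = v), aV v e.2.2 :=
      Finset.sum_congr rfl fun e he => by rw [(Finset.mem_filter.mp he).2]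
    rw [hcg]
    apply sum_copies_aux
    · intro e he f hf hef
      obtain ⟨heM, hev⟩ := Finset.mem_filter.mp he
      obtain ⟨hfM, hfv⟩ := Finset.mem_filter.mp hf
      exact h3 e heM f hfM (Prod.ext (hev.trans hfv.symm) hef)
    · intro e he
      obtain ⟨heM, hev⟩ := Finset.mem_filter.mp he
      obtain ⟨_, _, a3, a4⟩ := h1 e heM
      simp only [Finset.mem_Icc]
      exact ⟨a3, hev ▸ a4⟩
    · intro j hj hnj
      obtain ⟨hj1, hj2⟩ := Finset.mem_Icc.mp hj
      refine hzV v j hj1 hj2 fun e he hej => ?_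
      have hev : e.2.1 = v := by rw [hej]
      exact hnj e (Finset.mem_filter.mpr ⟨he, hev⟩) (by rw [hej])
  have htotal : ∑ e ∈ M, W e.1 e.2
      = (∑ u : U, ∑ i ∈ Finset.Icc (1 : ℤ) (BU u), aU u i)
      + (∑ v : V, ∑ j ∈ Finset.Icc (1 : ℤ) (BV v), aV v j) := by
    have e1 : ∑ e ∈ M, W e.1 e.2 = ∑ e ∈ 𝓜, W e.1.1 e.2.1 := by
      rw [hMdef, reduceMatching]
      exact Finset.sum_image fun e he f hf h =>
        h4 e he f hf (Prod.mk.inj h).1 (Prod.mk.inj h).2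
    have e2 : ∑ e ∈ 𝓜, W e.1.1 e.2.1
        = ∑ e ∈ 𝓜, (aU e.1.1 e.1.2 + aV e.2.1 e.2.2) :=
      Finset.sum_congr rfl fun e he => (hsat e he).symm
    have e3 : ∑ e ∈ 𝓜, aU e.1.1 e.1.2
        = ∑ u : U, ∑ i ∈ Finset.Icc (1 : ℤ) (BU u), aU u i := by
      rw [← Finset.sum_fiberwise 𝓜 (fun e => e.1.1) (fun e => aU e.1.1 e.1.2)]
      exact Finset.sum_congr rfl fun u _ => hAU u
    have e4 : ∑ e ∈ 𝓜, aV e.2.1 e.2.2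
        = ∑ v : V, ∑ j ∈ Finset.Icc (1 : ℤ) (BV v), aV v j := by
      rw [← Finset.sum_fiberwise 𝓜 (fun e => e.2.1) (fun e => aV e.2.1 e.2.2)]
      exact Finset.sum_congr rfl fun v _ => hAV v
    rw [e1, e2, Finset.sum_add_distrib, e3, e4]
  constructor
  · exact ⟨M, fun e _ => Finset.mem_product.mpr ⟨Finset.mem_univ _, Finset.mem_univ _⟩,
      ⟨hredU, hredV⟩, rfl⟩
  · rintro t ⟨M', hsub, ⟨hbu, hbv⟩, rfl⟩
    -- minimum allocations
    have hneU : ∀ u : U, (Finset.Icc (1 : ℤ) (BU u)).Nonempty :=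
      fun u => Finset.nonempty_Icc.mpr (hBU u)
    have hneV : ∀ v : V, (Finset.Icc (1 : ℤ) (BV v)).Nonempty :=
      fun v => Finset.nonempty_Icc.mpr (hBV v)
    set mU : U → ℚ := fun u => (Finset.Icc (1 : ℤ) (BU u)).inf' (hneU u) (aU u) with hmU
    set mV : V → ℚ := fun v => (Finset.Icc (1 : ℤ) (BV v)).inf' (hneV v) (aV v) with hmV
    have hmU0 : ∀ u, 0 ≤ mU u := fun u =>
      Finset.le_inf' _ _ fun i hi =>
        hnU u i (Finset.mem_Icc.mp hi).1 (Finset.mem_Icc.mp hi).2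
    have hmV0 : ∀ v, 0 ≤ mV v := fun v =>
      Finset.le_inf' _ _ fun j hj =>
        hnV v j (Finset.mem_Icc.mp hj).1 (Finset.mem_Icc.mp hj).2
    -- chosen witness edges for matched pairs
    have hpick : ∀ e ∈ M, ∃ E, E ∈ 𝓜 ∧ ((E.1.1 : U), (E.2.1 : V)) = e := by
      intro e he
      rw [hMdef, reduceMatching] at he
      obtain ⟨E, hE, hEe⟩ := Finset.mem_image.mp he
      exact ⟨E, hE, hEe⟩
    choose pk hpkM hpke using hpick
    set cU : U × V → ℚ := fun e => if h : e ∈ M then aU e.1 (pk e h).1.2 else mU e.1 with hcU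
    set cV : U × V → ℚ := fun e => if h : e ∈ M then aV e.2 (pk e h).2.2 else mV e.2 with hcV
    set idxU : U × V → ℤ := fun e => if h : e ∈ M then (pk e h).1.2 else 0 with hidxU
    set idxV : U × V → ℤ := fun e => if h : e ∈ M then (pk e h).2.2 else 0 with hidxV
    have hpk1 : ∀ (e) (h : e ∈ M), (pk e h).1.1 = e.1 :=
      fun e h => congrArg Prod.fst (hpke e h)
    have hpk2 : ∀ (e) (h : e ∈ M), (pk e h).2.1 = e.2 :=
      fun e h => congrArg Prod.snd (hpke e h)
    -- per-edge bound
    have hedge : ∀ e ∈ M', W e.1 e.2 ≤ cU e + cV e := by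
      intro e _
      by_cases h : e ∈ M
      · have hs := hsat (pk e h) (hpkM e h)
        rw [hpk1 e h, hpk2 e h] at hs
        simp only [hcU, hcV, dif_pos h]
        exact le_of_eq hs.symm
      · obtain ⟨i, hi, hieq⟩ := Finset.exists_mem_eq_inf' (hneU e.1) (aU e.1)
        obtain ⟨j, hj, hjeq⟩ := Finset.exists_mem_eq_inf' (hneV e.2) (aV e.2)
        have hst := hstab e.1 e.2 h i j (Finset.mem_Icc.mp hi).1 (Finset.mem_Icc.mp hi).2
          (Finset.mem_Icc.mp hj).1 (Finset.mem_Icc.mp hj).2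
        simp only [hcU, hcV, dif_neg h, hmU, hmV]
        rw [hieq, hjeq]
        exact hst
    -- U-side sum bound
    have hUsum : ∑ e ∈ M', cU e ≤ ∑ u : U, ∑ i ∈ Finset.Icc (1 : ℤ) (BU u), aU u i := by
      rw [← Finset.sum_fiberwise M' (fun e => e.1) cU]
      apply Finset.sum_le_sum
      intro u _
      apply node_bound_aux (M'.filter fun e => e.1 = u) (fun e => e ∈ M) cU (aU u)
        (BU u) (mU u) idxU (hmU0 u)
      · intro i hi
        exact Finset.inf'_le _ hi
      · intro e he
        obtain ⟨heu, heM⟩ := Finset.mem_filter.mp he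
        have heu' : e.1 = u := (Finset.mem_filter.mp heu).2
        obtain ⟨a1, a2, _, _⟩ := h1 (pk e heM) (hpkM e heM)
        simp only [hidxU, dif_pos heM, Finset.mem_Icc]
        rw [hpk1 e heM, heu'] at a2
        exact ⟨a1, a2⟩
      · intro e he f hf hef
        obtain ⟨heu, heM⟩ := Finset.mem_filter.mp he
        obtain ⟨hfu, hfM⟩ := Finset.mem_filter.mp hf
        simp only [hidxU, dif_pos heM, dif_pos hfM] at hef
        have h11 : (pk e heM).1.1 = (pk f hfM).1.1 := by
          rw [hpk1 e heM, hpk1 f hfM, (Finset.mem_filter.mp heu).2,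
            (Finset.mem_filter.mp hfu).2]
        have := h2 (pk e heM) (hpkM e heM) (pk f hfM) (hpkM f hfM) (Prod.ext h11 hef)
        rw [← hpke e heM, ← hpke f hfM, this]
      · intro e he
        have heM := (Finset.mem_filter.mp he).2
        simp only [hcU, hidxU, dif_pos heM]
        rw [(Finset.mem_filter.mp (Finset.mem_filter.mp he).1).2]
      · intro e he heM
        have heu' : e.1 = u := (Finset.mem_filter.mp he).2
        simp only [hcU, dif_neg heM]
        rw [heu']
      · exact hbu u
    -- V-side sum bound
    have hVsum : ∑ e ∈ M', cV e ≤ ∑ v : V, ∑ j ∈ Finset.Icc (1 : ℤ) (BV v), aV v j := by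
      rw [← Finset.sum_fiberwise M' (fun e => e.2) cV]
      apply Finset.sum_le_sum
      intro v _
      apply node_bound_aux (M'.filter fun e => e.2 = v) (fun e => e ∈ M) cV (aV v)
        (BV v) (mV v) idxV (hmV0 v)
      · intro j hj
        exact Finset.inf'_le _ hj
      · intro e he
        obtain ⟨hev, heM⟩ := Finset.mem_filter.mp he
        have hev' : e.2 = v := (Finset.mem_filter.mp hev).2
        obtain ⟨_, _, a3, a4⟩ := h1 (pk e heM) (hpkM e heM)
        simp only [hidxV, dif_pos heM, Finset.mem_Icc]
        rw [hpk2 e heM, hev'] at a4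
        exact ⟨a3, a4⟩
      · intro e he f hf hef
        obtain ⟨hev, heM⟩ := Finset.mem_filter.mp he
        obtain ⟨hfv, hfM⟩ := Finset.mem_filter.mp hf
        simp only [hidxV, dif_pos heM, dif_pos hfM] at hef
        have h22 : (pk e heM).2.1 = (pk f hfM).2.1 := by
          rw [hpk2 e heM, hpk2 f hfM, (Finset.mem_filter.mp hev).2,
            (Finset.mem_filter.mp hfv).2]
        have := h3 (pk e heM) (hpkM e heM) (pk f hfM) (hpkM f hfM) (Prod.ext h22 hef)
        rw [← hpke e heM, ← hpke f hfM, this]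
      · intro e he
        have heM := (Finset.mem_filter.mp he).2
        simp only [hcV, hidxV, dif_pos heM]
        rw [(Finset.mem_filter.mp (Finset.mem_filter.mp he).1).2]
      · intro e he heM
        have hev' : e.2 = v := (Finset.mem_filter.mp he).2
        simp only [hcV, dif_neg heM]
        rw [hev']
      · exact hbv v
    calc ∑ e ∈ M', W e.1 e.2 ≤ ∑ e ∈ M', (cU e + cV e) := Finset.sum_le_sum hedge
      _ = ∑ e ∈ M', cU e + ∑ e ∈ M', cV e := Finset.sum_add_distrib
      _ ≤ (∑ u : U, ∑ i ∈ Finset.Icc (1 : ℤ) (BU u), aU u i)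
          + (∑ v : V, ∑ j ∈ Finset.Icc (1 : ℤ) (BV v), aV v j) := add_le_add hUsum hVsum
      _ = ∑ e ∈ M, W e.1 e.2 := htotal.symm
end

section
/- If (a, 𝓜) is a copies-core solution, then the total allocation of all copies equals the maximum B-matching value over G: ∑_{g∈G} ∑_{k=1}^{B(g)} a_{g,k} = max over B-matchings M' ⊆ E of ∑_{(u,v)∈M'} W(u,v). -/
open Finset

open Finset

lemma auxExistsInjOn {α β : Type*} [Nonempty β] (S : Finset α) (T : Finset β)
    (h : S.card ≤ T.card) :
    ∃ g : α → β, Set.InjOn g S ∧ ∀ x ∈ S, g x ∈ T := by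
  classical
  refine ⟨fun x => if hx : x ∈ S then
    (T.equivFin.symm (Fin.castLE h (S.equivFin ⟨x, hx⟩)) : T) else Classical.arbitrary β,
    ?_, ?_⟩
  · intro x hx y hy hxy
    have hx' : x ∈ S := hx
    have hy' : y ∈ S := hy
    dsimp only at hxy
    rw [dif_pos hx', dif_pos hy'] at hxy
    have := Subtype.ext hxy
    have h2 := T.equivFin.symm.injective this
    have h3 : ((S.equivFin ⟨x, hx'⟩ : Fin S.card) : ℕ) = ((S.equivFin ⟨y, hy'⟩ : Fin S.card) : ℕ) := by
      simpa [Fin.ext_iff] using h2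
    have := S.equivFin.injective (Fin.ext h3)
    exact congrArg Subtype.val this
  · intro x hx
    dsimp only
    rw [dif_pos hx]
    exact Subtype.mem _

lemma auxExtendInjOn {α β : Type*} [Nonempty β] [DecidableEq α] [DecidableEq β]
    (S S₀ : Finset α) (T : Finset β) (hS₀ : S₀ ⊆ S) (f : α → β)
    (hinj : Set.InjOn f S₀) (hmaps : ∀ x ∈ S₀, f x ∈ T) (hcard : S.card ≤ T.card) :
    ∃ g : α → β, Set.InjOn g S ∧ (∀ x ∈ S, g x ∈ T) ∧ ∀ x ∈ S₀, g x = f x := by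
  classical
  have himg : (S₀.image f).card = S₀.card := Finset.card_image_of_injOn hinj
  have hsub : S₀.image f ⊆ T := by
    intro y hy; obtain ⟨x, hx, rfl⟩ := Finset.mem_image.1 hy; exact hmaps x hx
  have hc2 : (S \ S₀).card ≤ (T \ S₀.image f).card := by
    rw [Finset.card_sdiff_of_subset hS₀, Finset.card_sdiff_of_subset hsub, himg]
    omega
  obtain ⟨g', hg'inj, hg'mem⟩ := auxExistsInjOn (S \ S₀) (T \ S₀.image f) hc2
  refine ⟨fun x => if x ∈ S₀ then f x else g' x, ?_, ?_, ?_⟩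
  · intro x hx y hy hxy
    simp only at hxy
    by_cases hx0 : x ∈ S₀ <;> by_cases hy0 : y ∈ S₀ <;>
      simp only [hx0, hy0, if_pos, if_neg, if_true, if_false] at hxy
    · exact hinj hx0 hy0 hxy
    · exfalso
      have hyS : y ∈ S \ S₀ := Finset.mem_sdiff.2 ⟨hy, hy0⟩
      have : g' y ∈ T \ S₀.image f := hg'mem y hyS
      rw [← hxy] at this
      exact (Finset.mem_sdiff.1 this).2 (Finset.mem_image_of_mem f hx0)
    · exfalso
      have hxS : x ∈ S \ S₀ := Finset.mem_sdiff.2 ⟨hx, hx0⟩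
      have : g' x ∈ T \ S₀.image f := hg'mem x hxS
      rw [hxy] at this
      exact (Finset.mem_sdiff.1 this).2 (Finset.mem_image_of_mem f hy0)
    · exact hg'inj (Finset.mem_sdiff.2 ⟨hx, hx0⟩) (Finset.mem_sdiff.2 ⟨hy, hy0⟩) hxy
  · intro x hx
    by_cases hx0 : x ∈ S₀
    · simpa [hx0] using hmaps x hx0
    · simp only [hx0, if_false]
      exact (Finset.mem_sdiff.1 (hg'mem x (Finset.mem_sdiff.2 ⟨hx, hx0⟩))).1
  · intro x hx0; simp [hx0]


variable {U V : Type*} [Fintype U] [Fintype V] [Nonempty U] [Nonempty V]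
  [DecidableEq U] [DecidableEq V]

/-- If `(a, 𝓜)` is a copies-core solution then the total allocation
of all copies equals the maximum `B`-matching value over `G`. -/
theorem total_alloc_eq_max_of_copiesCore (W : U → V → ℚ) (hW : ∀ u v, 0 ≤ W u v)
    (BU : U → ℤ) (BV : V → ℤ) (hBU : ∀ u, 1 ≤ BU u) (hBV : ∀ v, 1 ≤ BV v)
    (aU : U → ℤ → ℚ) (aV : V → ℤ → ℚ) (𝓜 : Finset ((U × ℤ) × (V × ℤ)))
    (hcore : IsCopiesCore W BU BV aU aV 𝓜) :
    IsGreatest (matchingValues W BU BV Finset.univ Finset.univ)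
      (∑ u : U, nodeAlloc (BU u) (aU u) + ∑ v : V, nodeAlloc (BV v) (aV v)) := by
  classical
  obtain ⟨⟨hgen, hinj1, hinj2, hinj4⟩, ⟨hannU, hannV⟩, hsat, hstab, hzU, hzV⟩ := hcore
  set M : Finset (U × V) := reduceMatching 𝓜 with hMdef
  have hmemM : ∀ p : U × V, p ∈ M ↔ ∃ e ∈ 𝓜, e.1.1 = p.1 ∧ e.2.1 = p.2 := by
    intro p
    simp only [hMdef, reduceMatching, Finset.mem_image, Prod.ext_iff]
  have hred_inj : ∀ e ∈ 𝓜, ∀ f ∈ 𝓜,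
      (e.1.1, e.2.1) = ((f.1.1 : U), (f.2.1 : V)) → e = f := by
    intro e he f hf hef
    injection hef with h1 h2
    exact hinj4 e he f hf h1 h2
  -- total allocations on each side equal sums over 𝓜
  have hstepU : ∀ u : U, nodeAlloc (BU u) (aU u)
      = ∑ e ∈ 𝓜.filter (fun e => e.1.1 = u), aU e.1.1 e.1.2 := by
    intro u
    unfold nodeAlloc
    have hne : ∀ i ∈ Finset.Icc (1:ℤ) (BU u), aU u i ≠ 0 → ∃ e ∈ 𝓜, e.1 = (u, i) := by
      intro i hi hne
      by_contra hcon
      push_neg at hcon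
      exact hne (hzU u i (Finset.mem_Icc.1 hi).1 (Finset.mem_Icc.1 hi).2 hcon)
    rw [← Finset.sum_filter_of_ne hne]
    refine (Finset.sum_bij (fun e _ => e.1.2) ?_ ?_ ?_ ?_).symm
    · intro e he
      rw [Finset.mem_filter] at he
      obtain ⟨he𝓜, heu⟩ := he
      obtain ⟨h1, h2, _, _⟩ := hgen e he𝓜
      refine Finset.mem_filter.2 ⟨Finset.mem_Icc.2 ⟨h1, heu ▸ h2⟩, ⟨e, he𝓜, ?_⟩⟩
      exact Prod.ext heu rfl
    · intro e he f hf hef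
      rw [Finset.mem_filter] at he hf
      exact hinj1 e he.1 f hf.1 (Prod.ext (he.2.trans hf.2.symm) hef)
    · intro i hi
      rw [Finset.mem_filter] at hi
      obtain ⟨_, e, he𝓜, he⟩ := hi
      refine ⟨e, Finset.mem_filter.2 ⟨he𝓜, congrArg Prod.fst he⟩, congrArg Prod.snd he⟩
    · intro e he
      rw [Finset.mem_filter] at he
      rw [he.2]
  have hstepV : ∀ v : V, nodeAlloc (BV v) (aV v)
      = ∑ e ∈ 𝓜.filter (fun e => e.2.1 = v), aV e.2.1 e.2.2 := by
    intro v
    unfold nodeAlloc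
    have hne : ∀ j ∈ Finset.Icc (1:ℤ) (BV v), aV v j ≠ 0 → ∃ e ∈ 𝓜, e.2 = (v, j) := by
      intro j hj hne
      by_contra hcon
      push_neg at hcon
      exact hne (hzV v j (Finset.mem_Icc.1 hj).1 (Finset.mem_Icc.1 hj).2 hcon)
    rw [← Finset.sum_filter_of_ne hne]
    refine (Finset.sum_bij (fun e _ => e.2.2) ?_ ?_ ?_ ?_).symm
    · intro e he
      rw [Finset.mem_filter] at he
      obtain ⟨he𝓜, hev⟩ := he
      obtain ⟨_, _, h3, h4⟩ := hgen e he𝓜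
      refine Finset.mem_filter.2 ⟨Finset.mem_Icc.2 ⟨h3, hev ▸ h4⟩, ⟨e, he𝓜, ?_⟩⟩
      exact Prod.ext hev rfl
    · intro e he f hf hef
      rw [Finset.mem_filter] at he hf
      exact hinj2 e he.1 f hf.1 (Prod.ext (he.2.trans hf.2.symm) hef)
    · intro j hj
      rw [Finset.mem_filter] at hj
      obtain ⟨_, e, he𝓜, he⟩ := hj
      refine ⟨e, Finset.mem_filter.2 ⟨he𝓜, congrArg Prod.fst he⟩, congrArg Prod.snd he⟩
    · intro e he
      rw [Finset.mem_filter] at he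
      rw [he.2]
  have htotU : ∑ u : U, nodeAlloc (BU u) (aU u) = ∑ e ∈ 𝓜, aU e.1.1 e.1.2 := by
    rw [← Finset.sum_fiberwise 𝓜 (fun e => e.1.1) (fun e => aU e.1.1 e.1.2)]
    exact Finset.sum_congr rfl fun u _ => hstepU u
  have htotV : ∑ v : V, nodeAlloc (BV v) (aV v) = ∑ e ∈ 𝓜, aV e.2.1 e.2.2 := by
    rw [← Finset.sum_fiberwise 𝓜 (fun e => e.2.1) (fun e => aV e.2.1 e.2.2)]
    exact Finset.sum_congr rfl fun v _ => hstepV v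
  have hsum : ∑ u : U, nodeAlloc (BU u) (aU u) + ∑ v : V, nodeAlloc (BV v) (aV v)
      = ∑ e ∈ 𝓜, W e.1.1 e.2.1 := by
    rw [htotU, htotV, ← Finset.sum_add_distrib]
    exact Finset.sum_congr rfl fun e he => hsat e he
  have hMval : ∑ p ∈ M, W p.1 p.2 = ∑ e ∈ 𝓜, W e.1.1 e.2.1 := by
    rw [hMdef, reduceMatching, Finset.sum_image hred_inj]
  -- M is a B-matching
  have hfilU : ∀ u : U, M.filter (fun p => p.1 = u)
      = (𝓜.filter (fun e => e.1.1 = u)).image (fun e => (e.1.1, e.2.1)) := by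
    intro u
    ext p
    simp only [Finset.mem_filter, Finset.mem_image, hmemM]
    constructor
    · rintro ⟨⟨e, he, h1, h2⟩, hp⟩
      exact ⟨e, ⟨he, h1.trans hp⟩, by rw [h1, h2]⟩
    · rintro ⟨e, ⟨he, heu⟩, hep⟩
      exact ⟨⟨e, he, congrArg Prod.fst hep, congrArg Prod.snd hep⟩,
        (congrArg Prod.fst hep).symm.trans heu⟩
  have hfilV : ∀ v : V, M.filter (fun p => p.2 = v)
      = (𝓜.filter (fun e => e.2.1 = v)).image (fun e => (e.1.1, e.2.1)) := by
    intro v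
    ext p
    simp only [Finset.mem_filter, Finset.mem_image, hmemM]
    constructor
    · rintro ⟨⟨e, he, h1, h2⟩, hp⟩
      exact ⟨e, ⟨he, h2.trans hp⟩, by rw [h1, h2]⟩
    · rintro ⟨e, ⟨he, hev⟩, hep⟩
      exact ⟨⟨e, he, congrArg Prod.fst hep, congrArg Prod.snd hep⟩,
        (congrArg Prod.snd hep).symm.trans hev⟩
  have hcard𝓜U : ∀ u : U, ((𝓜.filter (fun e => e.1.1 = u)).card : ℤ) ≤ BU u := by
    intro u
    have : (𝓜.filter (fun e => e.1.1 = u)).card ≤ (Finset.Icc (1:ℤ) (BU u)).card := by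
      apply Finset.card_le_card_of_injOn (fun e => e.1.2)
      · intro e he
        rw [Finset.mem_coe, Finset.mem_filter] at he
        obtain ⟨h1, h2, _, _⟩ := hgen e he.1
        exact Finset.mem_Icc.2 ⟨h1, he.2 ▸ h2⟩
      · intro e he f hf hef
        rw [Finset.mem_coe, Finset.mem_filter] at he hf
        exact hinj1 e he.1 f hf.1 (Prod.ext (he.2.trans hf.2.symm) hef)
    rw [Int.card_Icc] at this
    have := hBU u
    omega
  have hcard𝓜V : ∀ v : V, ((𝓜.filter (fun e => e.2.1 = v)).card : ℤ) ≤ BV v := by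
    intro v
    have : (𝓜.filter (fun e => e.2.1 = v)).card ≤ (Finset.Icc (1:ℤ) (BV v)).card := by
      apply Finset.card_le_card_of_injOn (fun e => e.2.2)
      · intro e he
        rw [Finset.mem_coe, Finset.mem_filter] at he
        obtain ⟨_, _, h3, h4⟩ := hgen e he.1
        exact Finset.mem_Icc.2 ⟨h3, he.2 ▸ h4⟩
      · intro e he f hf hef
        rw [Finset.mem_coe, Finset.mem_filter] at he hf
        exact hinj2 e he.1 f hf.1 (Prod.ext (he.2.trans hf.2.symm) hef)
    rw [Int.card_Icc] at this
    have := hBV v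
    omega
  have hMBmatch : IsBMatching BU BV M := by
    constructor
    · intro u
      rw [hfilU u]
      calc ((((𝓜.filter (fun e => e.1.1 = u)).image (fun e => (e.1.1, e.2.1))).card : ℤ))
          ≤ ((𝓜.filter (fun e => e.1.1 = u)).card : ℤ) := by
            exact_mod_cast Finset.card_image_le
        _ ≤ BU u := hcard𝓜U u
    · intro v
      rw [hfilV v]
      calc ((((𝓜.filter (fun e => e.2.1 = v)).image (fun e => (e.1.1, e.2.1))).card : ℤ))
          ≤ ((𝓜.filter (fun e => e.2.1 = v)).card : ℤ) := by
            exact_mod_cast Finset.card_image_le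
        _ ≤ BV v := hcard𝓜V v
  constructor
  · -- membership
    exact ⟨M, by simp [Finset.subset_iff], hMBmatch, by rw [hsum, ← hMval]⟩
  · -- upper bound
    rintro t ⟨M', hM'sub, ⟨hM'U, hM'V⟩, rfl⟩
    -- choice of matched edges
    have hEex : ∀ p : U × V, p ∈ M → ∃ e, e ∈ 𝓜 ∧ e.1.1 = p.1 ∧ e.2.1 = p.2 := by
      intro p hp
      obtain ⟨e, he, h1, h2⟩ := (hmemM p).1 hp
      exact ⟨e, he, h1, h2⟩
    set E : U × V → (U × ℤ) × (V × ℤ) :=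
      fun p => if h : p ∈ M then (hEex p h).choose else Classical.arbitrary _ with hEdef
    have hEspec : ∀ p ∈ M, E p ∈ 𝓜 ∧ (E p).1.1 = p.1 ∧ (E p).2.1 = p.2 := by
      intro p hp
      rw [hEdef]
      dsimp only
      rw [dif_pos hp]
      exact (hEex p hp).choose_spec
    -- U-side copy assignments
    set SU : U → Finset V := fun u => (M'.filter (fun p => p.1 = u)).image Prod.snd
      with hSUdef
    have hSUmem : ∀ u : U, ∀ p ∈ M', p.1 = u → p.2 ∈ SU u := by
      intro u p hp hpu
      exact Finset.mem_image.2 ⟨p, Finset.mem_filter.2 ⟨hp, hpu⟩, rfl⟩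
    have hSUcard : ∀ u : U, (SU u).card ≤ (Finset.Icc (1:ℤ) (BU u)).card := by
      intro u
      have h1 : (SU u).card ≤ (M'.filter (fun p => p.1 = u)).card := Finset.card_image_le
      have h2 := hM'U u
      have h3 := hBU u
      rw [Int.card_Icc]
      omega
    have hφex : ∀ u : U, ∃ g : V → ℤ, Set.InjOn g (SU u)
        ∧ (∀ v ∈ SU u, g v ∈ Finset.Icc (1:ℤ) (BU u))
        ∧ ∀ v ∈ (SU u).filter (fun v => (u, v) ∈ M), g v = (E (u, v)).1.2 := by
      intro u
      apply auxExtendInjOn (SU u) ((SU u).filter (fun v => (u, v) ∈ M))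
        (Finset.Icc (1:ℤ) (BU u)) (Finset.filter_subset _ _)
        (fun v => (E (u, v)).1.2) ?_ ?_ (hSUcard u)
      · intro v hv v' hv' hvv'
        rw [Finset.mem_coe, Finset.mem_filter] at hv hv'
        obtain ⟨he, h1, h2⟩ := hEspec (u, v) hv.2
        obtain ⟨he', h1', h2'⟩ := hEspec (u, v') hv'.2
        replace h1 : (E (u, v)).1.1 = u := h1
        replace h2 : (E (u, v)).2.1 = v := h2
        replace h1' : (E (u, v')).1.1 = u := h1'
        replace h2' : (E (u, v')).2.1 = v' := h2'
        have heq : E (u, v) = E (u, v') :=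
          hinj1 _ he _ he' (Prod.ext (h1.trans h1'.symm) hvv')
        rw [← h2, ← h2', heq]
      · intro v hv
        rw [Finset.mem_filter] at hv
        obtain ⟨he, h1, _⟩ := hEspec (u, v) hv.2
        replace h1 : (E (u, v)).1.1 = u := h1
        obtain ⟨g1, g2, _, _⟩ := hgen _ he
        exact Finset.mem_Icc.2 ⟨g1, g2.trans_eq (congrArg BU h1)⟩
    choose φ hφinj hφmem hφagree using hφex
    -- V-side copy assignments
    set SV : V → Finset U := fun v => (M'.filter (fun p => p.2 = v)).image Prod.fst
      with hSVdef
    have hSVmem : ∀ v : V, ∀ p ∈ M', p.2 = v → p.1 ∈ SV v := by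
      intro v p hp hpv
      exact Finset.mem_image.2 ⟨p, Finset.mem_filter.2 ⟨hp, hpv⟩, rfl⟩
    have hSVcard : ∀ v : V, (SV v).card ≤ (Finset.Icc (1:ℤ) (BV v)).card := by
      intro v
      have h1 : (SV v).card ≤ (M'.filter (fun p => p.2 = v)).card := Finset.card_image_le
      have h2 := hM'V v
      have h3 := hBV v
      rw [Int.card_Icc]
      omega
    have hψex : ∀ v : V, ∃ g : U → ℤ, Set.InjOn g (SV v)
        ∧ (∀ u ∈ SV v, g u ∈ Finset.Icc (1:ℤ) (BV v))
        ∧ ∀ u ∈ (SV v).filter (fun u => (u, v) ∈ M), g u = (E (u, v)).2.2 := by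
      intro v
      apply auxExtendInjOn (SV v) ((SV v).filter (fun u => (u, v) ∈ M))
        (Finset.Icc (1:ℤ) (BV v)) (Finset.filter_subset _ _)
        (fun u => (E (u, v)).2.2) ?_ ?_ (hSVcard v)
      · intro u hu u' hu' huu'
        rw [Finset.mem_coe, Finset.mem_filter] at hu hu'
        obtain ⟨he, h1, h2⟩ := hEspec (u, v) hu.2
        obtain ⟨he', h1', h2'⟩ := hEspec (u', v) hu'.2
        replace h1 : (E (u, v)).1.1 = u := h1
        replace h2 : (E (u, v)).2.1 = v := h2
        replace h1' : (E (u', v)).1.1 = u' := h1'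
        replace h2' : (E (u', v)).2.1 = v := h2'
        have heq : E (u, v) = E (u', v) :=
          hinj2 _ he _ he' (Prod.ext (h2.trans h2'.symm) huu')
        rw [← h1, ← h1', heq]
      · intro u hu
        rw [Finset.mem_filter] at hu
        obtain ⟨he, _, h2⟩ := hEspec (u, v) hu.2
        replace h2 : (E (u, v)).2.1 = v := h2
        obtain ⟨_, _, g3, g4⟩ := hgen _ he
        exact Finset.mem_Icc.2 ⟨g3, g4.trans_eq (congrArg BV h2)⟩
    choose ψ hψinj hψmem hψagree using hψex
    -- main inequality
    have key : ∑ p ∈ M', W p.1 p.2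
        ≤ ∑ p ∈ M', (aU p.1 (φ p.1 p.2) + aV p.2 (ψ p.2 p.1)) := by
      apply Finset.sum_le_sum
      intro p hp
      have hp2 : p.2 ∈ SU p.1 := hSUmem p.1 p hp rfl
      have hp1 : p.1 ∈ SV p.2 := hSVmem p.2 p hp rfl
      by_cases hpM : (p.1, p.2) ∈ M
      · have hφa : φ p.1 p.2 = (E (p.1, p.2)).1.2 :=
          hφagree p.1 p.2 (Finset.mem_filter.2 ⟨hp2, hpM⟩)
        have hψa : ψ p.2 p.1 = (E (p.1, p.2)).2.2 :=
          hψagree p.2 p.1 (Finset.mem_filter.2 ⟨hp1, hpM⟩)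
        obtain ⟨he, h1, h2⟩ := hEspec (p.1, p.2) hpM
        replace h1 : (E (p.1, p.2)).1.1 = p.1 := h1
        replace h2 : (E (p.1, p.2)).2.1 = p.2 := h2
        have hth := hsat _ he
        rw [h1, h2] at hth
        rw [hφa, hψa]
        exact le_of_eq hth.symm
      · have hi := Finset.mem_Icc.1 (hφmem p.1 p.2 hp2)
        have hj := Finset.mem_Icc.1 (hψmem p.2 p.1 hp1)
        exact hstab p.1 p.2 hpM _ _ hi.1 hi.2 hj.1 hj.2
    have keyU : ∑ p ∈ M', aU p.1 (φ p.1 p.2) ≤ ∑ u : U, nodeAlloc (BU u) (aU u) := by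
      rw [← Finset.sum_fiberwise M' (fun p => p.1) (fun p => aU p.1 (φ p.1 p.2))]
      apply Finset.sum_le_sum
      intro u _
      have e1 : ∑ p ∈ M'.filter (fun p => p.1 = u), aU p.1 (φ p.1 p.2)
          = ∑ v ∈ SU u, aU u (φ u v) := by
        rw [hSUdef]
        dsimp only
        rw [Finset.sum_image (fun p hp q hq hpq => by
          rw [Finset.mem_coe, Finset.mem_filter] at hp hq
          exact Prod.ext (hp.2.trans hq.2.symm) hpq)]
        apply Finset.sum_congr rfl
        intro p hp
        rw [Finset.mem_filter] at hp
        rw [hp.2]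
      have e2 : ∑ v ∈ SU u, aU u (φ u v) = ∑ i ∈ (SU u).image (φ u), aU u i := by
        rw [Finset.sum_image (fun v hv v' hv' h => hφinj u hv hv' h)]
      rw [e1, e2]
      apply Finset.sum_le_sum_of_subset_of_nonneg
      · intro i hi
        obtain ⟨v, hv, rfl⟩ := Finset.mem_image.1 hi
        exact hφmem u v hv
      · intro i hi _
        have := Finset.mem_Icc.1 hi
        exact hannU u i this.1 this.2
    have keyV : ∑ p ∈ M', aV p.2 (ψ p.2 p.1) ≤ ∑ v : V, nodeAlloc (BV v) (aV v) := by
      rw [← Finset.sum_fiberwise M' (fun p => p.2) (fun p => aV p.2 (ψ p.2 p.1))]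
      apply Finset.sum_le_sum
      intro v _
      have e1 : ∑ p ∈ M'.filter (fun p => p.2 = v), aV p.2 (ψ p.2 p.1)
          = ∑ u ∈ SV v, aV v (ψ v u) := by
        rw [hSVdef]
        dsimp only
        rw [Finset.sum_image (fun p hp q hq hpq => by
          rw [Finset.mem_coe, Finset.mem_filter] at hp hq
          exact Prod.ext hpq (hp.2.trans hq.2.symm))]
        apply Finset.sum_congr rfl
        intro p hp
        rw [Finset.mem_filter] at hp
        rw [hp.2]
      have e2 : ∑ u ∈ SV v, aV v (ψ v u) = ∑ j ∈ (SV v).image (ψ v), aV v j := by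
        rw [Finset.sum_image (fun u hu u' hu' h => hψinj v hu hu' h)]
      rw [e1, e2]
      apply Finset.sum_le_sum_of_subset_of_nonneg
      · intro j hj
        obtain ⟨u, hu, rfl⟩ := Finset.mem_image.1 hj
        exact hψmem v u hu
      · intro j hj _
        have := Finset.mem_Icc.1 hj
        exact hannV v j this.1 this.2
    calc ∑ p ∈ M', W p.1 p.2
        ≤ ∑ p ∈ M', (aU p.1 (φ p.1 p.2) + aV p.2 (ψ p.2 p.1)) := key
      _ = ∑ p ∈ M', aU p.1 (φ p.1 p.2) + ∑ p ∈ M', aV p.2 (ψ p.2 p.1) :=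
          Finset.sum_add_distrib
      _ ≤ ∑ u : U, nodeAlloc (BU u) (aU u) + ∑ v : V, nodeAlloc (BV v) (aV v) :=
          add_le_add keyU keyV
end

section
/- For every finite complete bipartite graph (U,V,E) with weight function W : E → ℚ, W(u,v) ≥ 0, and B-value function B : G → ℤ, B(g) ≥ 1, there exists a copies-core solution (a, 𝓜); that is, a B-copies matching 𝓜 and a copies allocation a satisfying edge saturation, stability against pairwise deviation, and zero-gain for unmatched copies. -/
open Finset

namespace CopiesCore

variable {X : Type*}

theorem getLastD_append_cons (l2 : List X) (x : X) :
    ∀ (l1 : List X) (a : X), (l1 ++ x :: l2).getLastD a = l2.getLastD x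
  | [], a => by
      cases l2 with
      | nil => simp
      | cons h t => simp only [List.nil_append, List.getLastD_cons]
  | h :: t, a => by
      rw [List.cons_append, List.getLastD_cons]; exact getLastD_append_cons l2 x t h

variable (ℓ : X → X → ℚ)

/-- cost of the walk `s :: l`. -/
def wcost : X → List X → ℚ
  | _, [] => 0
  | s, y :: t => ℓ s y + wcost y t

@[simp] theorem wcost_nil (s : X) : wcost ℓ s [] = 0 := rfl
@[simp] theorem wcost_cons (s y : X) (t : List X) :
    wcost ℓ s (y :: t) = ℓ s y + wcost ℓ y t := rfl

theorem wcost_append (L1 : List X) :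
    ∀ (s : X) (L2 : List X), wcost ℓ s (L1 ++ L2) = wcost ℓ s L1 + wcost ℓ (L1.getLastD s) L2 := by
  induction L1 with
  | nil => intro s L2; simp
  | cons y t ih => intro s L2; rw [List.cons_append, wcost_cons, ih y, List.getLastD_cons, wcost_cons, add_assoc]

/-- list of arcs of the walk `s :: l`. -/
def arcsOf : X → List X → List (X × X)
  | _, [] => []
  | s, y :: t => (s, y) :: arcsOf y t

@[simp] theorem arcsOf_nil (s : X) : arcsOf s ([] : List X) = [] := rfl
@[simp] theorem arcsOf_cons (s y : X) (t : List X) :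
    arcsOf s (y :: t) = (s, y) :: arcsOf y t := rfl

theorem wcost_eq_sum_arcs : ∀ (s : X) (l : List X),
    wcost ℓ s l = ((arcsOf s l).map fun a => ℓ a.1 a.2).sum
  | _, [] => by simp
  | s, y :: t => by simp [wcost_eq_sum_arcs y t]

theorem map_fst_arcsOf : ∀ (s : X) (l : List X),
    (arcsOf s l).map Prod.fst = (s :: l).dropLast
  | _, [] => by simp
  | s, y :: t => by
      rw [arcsOf_cons, List.map_cons, map_fst_arcsOf y t]
      cases t <;> simp

theorem map_snd_arcsOf : ∀ (s : X) (l : List X), (arcsOf s l).map Prod.snd = l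
  | _, [] => by simp
  | s, y :: t => by rw [arcsOf_cons, List.map_cons, map_snd_arcsOf y t]

theorem length_arcsOf (s : X) (l : List X) : (arcsOf s l).length = l.length := by
  induction l generalizing s with
  | nil => rfl
  | cons y t ih => simp [ih]


section Potential
variable [Fintype X] [DecidableEq X]

/-- nodup paths starting at `g` (implicitly) and ending at `x` (`g` itself if the list is empty). -/
noncomputable def pathsTo (g x : X) : Finset (List X) :=
  ((Finset.univ : Finset {l : List X // l.Nodup}).image Subtype.val).filter
    (fun L => g ∉ L ∧ L.getLastD g = x)

theorem mem_pathsTo {g x : X} {L : List X} :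
    L ∈ pathsTo g x ↔ L.Nodup ∧ g ∉ L ∧ L.getLastD g = x := by
  constructor
  · intro h
    rw [pathsTo, Finset.mem_filter, Finset.mem_image] at h
    obtain ⟨⟨⟨l, hl⟩, -, rfl⟩, h2, h3⟩ := h
    exact ⟨hl, h2, h3⟩
  · rintro ⟨h1, h2, h3⟩
    rw [pathsTo, Finset.mem_filter, Finset.mem_image]
    exact ⟨⟨⟨L, h1⟩, Finset.mem_univ _, rfl⟩, h2, h3⟩

theorem pathsTo_nonempty (g x : X) : (pathsTo g x).Nonempty := by
  by_cases h : x = g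
  · exact ⟨[], mem_pathsTo.2 ⟨List.nodup_nil, List.not_mem_nil, h.symm⟩⟩
  · refine ⟨[x], mem_pathsTo.2 ⟨List.nodup_singleton x, ?_, rfl⟩⟩
    simp [Ne.symm h]

theorem pathsTo_self (g : X) : pathsTo g g = {[]} := by
  ext L
  simp only [Finset.mem_singleton, mem_pathsTo]
  constructor
  · rintro ⟨h1, h2, h3⟩
    cases L with
    | nil => rfl
    | cons a t =>
      exfalso
      rw [List.getLastD_cons] at h3
      exact h2 (h3 ▸ (List.getLastD_mem_cons : t.getLastD a ∈ a :: t))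
  · rintro rfl; exact ⟨List.nodup_nil, List.not_mem_nil, rfl⟩

noncomputable def dist (ℓ : X → X → ℚ) (g x : X) : ℚ :=
  ((pathsTo g x).image (wcost ℓ g)).min' ((pathsTo_nonempty g x).image _)

theorem dist_le (ℓ : X → X → ℚ) {g x : X} {L : List X} (h : L ∈ pathsTo g x) :
    dist ℓ g x ≤ wcost ℓ g L :=
  Finset.min'_le _ _ (Finset.mem_image_of_mem _ h)

theorem exists_dist_path (ℓ : X → X → ℚ) (g x : X) :
    ∃ L ∈ pathsTo g x, wcost ℓ g L = dist ℓ g x := by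
  have := Finset.min'_mem ((pathsTo g x).image (wcost ℓ g)) ((pathsTo_nonempty g x).image _)
  rw [Finset.mem_image] at this
  obtain ⟨L, hL, hc⟩ := this
  exact ⟨L, hL, hc⟩

theorem dist_self (ℓ : X → X → ℚ) (g : X) : dist ℓ g g = 0 := by
  have h : pathsTo g g = {[]} := pathsTo_self g
  simp [dist, h]

theorem dist_relax (ℓ : X → X → ℚ) (g : X)
    (hcyc : ∀ (s : X) (L : List X), (s :: L).Nodup → 0 ≤ wcost ℓ s (L ++ [s])) (a x : X) :
    dist ℓ g x ≤ dist ℓ g a + ℓ a x := by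
  obtain ⟨L, hL, hc⟩ := exists_dist_path ℓ g a
  rw [mem_pathsTo] at hL
  obtain ⟨hnd, hg, hlast⟩ := hL
  by_cases hx : x ∈ g :: L
  · rcases List.mem_cons.1 hx with hEq | hxL
    · -- x = g
      have hnd' : (g :: L).Nodup := List.nodup_cons.2 ⟨hg, hnd⟩
      have h0 := hcyc g L hnd'
      rw [wcost_append] at h0
      simp only [wcost_cons, wcost_nil, add_zero] at h0
      rw [hlast, hc] at h0
      rw [hEq, dist_self]
      linarith
    · obtain ⟨l1, l2, rfl⟩ := List.append_of_mem hxL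
      have hsplit : l1 ++ x :: l2 = (l1 ++ [x]) ++ l2 := by simp
      have hnd2 : ((l1 ++ [x]) ++ l2).Nodup := hsplit ▸ hnd
      have hP : (l1 ++ [x]) ∈ pathsTo g x := by
        refine mem_pathsTo.2 ⟨(List.nodup_append.1 hnd2).1, fun hh => hg ?_, by simp⟩
        · exact hsplit ▸ (List.mem_append.2 (Or.inl hh))
      have hxl2 : (x :: l2).Nodup := (List.sublist_append_right l1 (x :: l2)).nodup hnd
      have hcyc2 := hcyc x l2 hxl2
      rw [wcost_append] at hcyc2
      simp only [wcost_cons, wcost_nil, add_zero] at hcyc2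
      have hcostsplit : wcost ℓ g (l1 ++ x :: l2) =
          wcost ℓ g (l1 ++ [x]) + wcost ℓ x l2 := by
        rw [hsplit, wcost_append]
        simp
      have hlast2 : (l1 ++ x :: l2).getLastD g = l2.getLastD x := getLastD_append_cons l2 x l1 g
      rw [hlast2] at hlast
      calc dist ℓ g x ≤ wcost ℓ g (l1 ++ [x]) := dist_le ℓ hP
        _ ≤ wcost ℓ g (l1 ++ [x]) + (wcost ℓ x l2 + ℓ (l2.getLastD x) x) := by linarith
        _ = wcost ℓ g (l1 ++ x :: l2) + ℓ a x := by rw [hcostsplit, hlast]; ring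
        _ = dist ℓ g a + ℓ a x := by rw [hc]
  · -- fresh node
    have hP : L ++ [x] ∈ pathsTo g x := by
      refine mem_pathsTo.2 ⟨?_, ?_, by simp⟩
      · rw [List.nodup_append]
        refine ⟨hnd, List.nodup_singleton x, ?_⟩
        intro b hb c hc hbc
        rw [List.mem_singleton] at hc
        subst hc
        subst hbc
        exact hx (List.mem_cons_of_mem _ hb)
      · intro hh
        rcases List.mem_append.1 hh with h1 | h2
        · exact hg h1
        · rw [List.mem_singleton] at h2; exact hx (h2 ▸ (List.mem_cons_self : g ∈ g :: L))
    calc dist ℓ g x ≤ wcost ℓ g (L ++ [x]) := dist_le ℓ hP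
      _ = wcost ℓ g L + ℓ a x := by rw [wcost_append, hlast]; simp
      _ = dist ℓ g a + ℓ a x := by rw [hc]

theorem exists_potential (ℓ : X → X → ℚ) (g : X)
    (hcyc : ∀ (s : X) (L : List X), (s :: L).Nodup → 0 ≤ wcost ℓ s (L ++ [s])) :
    ∃ d : X → ℚ, d g = 0 ∧ ∀ a x, d x ≤ d a + ℓ a x :=
  ⟨dist ℓ g, dist_self ℓ g, dist_relax ℓ g hcyc⟩

end Potential

section Exchange

variable {U V : Type*} [Fintype U] [Fintype V] [DecidableEq U] [DecidableEq V]

/-- Sum of all weights. -/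
def Sw (W : U → V → ℚ) : ℚ :=
  ∑ e ∈ (Finset.univ ×ˢ Finset.univ : Finset (U × V)), W e.1 e.2

/-- A large constant. -/
def Kc (W : U → V → ℚ) : ℚ := (Fintype.card (Option (U ⊕ V)) + 1) * Sw W + 1

theorem Sw_nonneg (W : U → V → ℚ) (hW : ∀ u v, 0 ≤ W u v) : 0 ≤ Sw W :=
  Finset.sum_nonneg fun e _ => hW e.1 e.2

theorem W_le_Sw (W : U → V → ℚ) (hW : ∀ u v, 0 ≤ W u v) (u : U) (v : V) : W u v ≤ Sw W :=
  Finset.single_le_sum (f := fun e : U × V => W e.1 e.2) (fun e _ => hW e.1 e.2)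
    (a := (u, v)) (by simp)

theorem Kc_pos (W : U → V → ℚ) (hW : ∀ u v, 0 ≤ W u v) : 0 < Kc W := by
  have h := Sw_nonneg W hW
  have : (0 : ℚ) ≤ (Fintype.card (Option (U ⊕ V)) : ℚ) + 1 := by positivity
  unfold Kc; nlinarith

def degU (M : Finset (U × V)) (u : U) : ℤ := ((M.filter fun e => e.1 = u).card : ℤ)
def degV (M : Finset (U × V)) (v : V) : ℤ := ((M.filter fun e => e.2 = v).card : ℤ)

/-- Arc lengths of the auxiliary digraph. -/
def ell (W : U → V → ℚ) (BU : U → ℤ) (BV : V → ℤ) (M : Finset (U × V)) :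
    Option (U ⊕ V) → Option (U ⊕ V) → ℚ
  | none, none => 0
  | none, some (Sum.inl u) => if degU M u < BU u then 0 else Kc W
  | none, some (Sum.inr _) => 0
  | some (Sum.inl _), none => 0
  | some (Sum.inr v), none => if degV M v < BV v then 0 else Kc W
  | some (Sum.inl u), some (Sum.inr v) => if (u, v) ∈ M then Kc W else -W u v
  | some (Sum.inr v), some (Sum.inl u) => if (u, v) ∈ M then W u v else Kc W
  | some (Sum.inl u), some (Sum.inl u') => if u = u' then 0 else Kc W
  | some (Sum.inr v), some (Sum.inr v') => if v = v' then 0 else Kc W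

section EllSimp
variable (W : U → V → ℚ) (BU : U → ℤ) (BV : V → ℤ) (M : Finset (U × V))

@[simp] theorem ell_nn : ell W BU BV M none none = 0 := rfl
@[simp] theorem ell_nu (u : U) :
    ell W BU BV M none (some (Sum.inl u)) = if degU M u < BU u then 0 else Kc W := rfl
@[simp] theorem ell_nv (v : V) : ell W BU BV M none (some (Sum.inr v)) = 0 := rfl
@[simp] theorem ell_un (u : U) : ell W BU BV M (some (Sum.inl u)) none = 0 := rfl
@[simp] theorem ell_vn (v : V) :
    ell W BU BV M (some (Sum.inr v)) none = if degV M v < BV v then 0 else Kc W := rfl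
@[simp] theorem ell_uv (u : U) (v : V) :
    ell W BU BV M (some (Sum.inl u)) (some (Sum.inr v)) =
      if (u, v) ∈ M then Kc W else -W u v := rfl
@[simp] theorem ell_vu (v : V) (u : U) :
    ell W BU BV M (some (Sum.inr v)) (some (Sum.inl u)) =
      if (u, v) ∈ M then W u v else Kc W := rfl
@[simp] theorem ell_uu (u u' : U) :
    ell W BU BV M (some (Sum.inl u)) (some (Sum.inl u')) = if u = u' then 0 else Kc W := rfl
@[simp] theorem ell_vv (v v' : V) :
    ell W BU BV M (some (Sum.inr v)) (some (Sum.inr v')) = if v = v' then 0 else Kc W := rfl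

end EllSimp

theorem ell_lb (W : U → V → ℚ) (BU : U → ℤ) (BV : V → ℤ) (M : Finset (U × V))
    (hW : ∀ u v, 0 ≤ W u v) (a b : Option (U ⊕ V)) : -(Sw W) ≤ ell W BU BV M a b := by
  have hS := Sw_nonneg W hW
  have hK := (Kc_pos W hW).le
  rcases a with _ | (u | v) <;> rcases b with _ | (u' | v')
  all_goals simp only [ell_nn, ell_nu, ell_nv, ell_un, ell_vn, ell_uv, ell_vu, ell_uu, ell_vv]
  all_goals try split_ifs
  all_goals
    first
      | linarith
      | linarith [hW u v', W_le_Sw W hW u v']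
      | linarith [hW u' v, W_le_Sw W hW u' v]

/-- projection to "added" edges. -/
def fA : Option (U ⊕ V) × Option (U ⊕ V) → Option (U × V)
  | (some (Sum.inl u), some (Sum.inr v)) => some (u, v)
  | _ => none

/-- projection to "removed" edges. -/
def fR : Option (U ⊕ V) × Option (U ⊕ V) → Option (U × V)
  | (some (Sum.inr v), some (Sum.inl u)) => some (u, v)
  | _ => none

theorem fA_eq_some {a : Option (U ⊕ V) × Option (U ⊕ V)} {e : U × V} :
    fA a = some e ↔ a = (some (Sum.inl e.1), some (Sum.inr e.2)) := by
  obtain ⟨a1, a2⟩ := a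
  rcases a1 with _ | (u | v) <;> rcases a2 with _ | (u' | v') <;>
    simp [fA, Prod.ext_iff] <;> aesop

theorem fR_eq_some {a : Option (U ⊕ V) × Option (U ⊕ V)} {e : U × V} :
    fR a = some e ↔ a = (some (Sum.inr e.2), some (Sum.inl e.1)) := by
  obtain ⟨a1, a2⟩ := a
  rcases a1 with _ | (u | v) <;> rcases a2 with _ | (u' | v') <;>
    simp [fR, Prod.ext_iff] <;> aesop

theorem sum_lb {α : Type*} (f : α → ℚ) (S K : ℚ) (hS : 0 ≤ S) :
    ∀ (l : List α), (∀ x ∈ l, -S ≤ f x) → (∃ x ∈ l, f x = K) →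
      K - l.length * S ≤ (l.map f).sum := by
  have hge : ∀ (l : List α), (∀ x ∈ l, -S ≤ f x) → -(l.length * S) ≤ (l.map f).sum := by
    intro l
    induction l with
    | nil => simp
    | cons a t ih =>
      intro h
      have := ih (fun x hx => h x (List.mem_cons_of_mem a hx))
      have ha := h a ((List.mem_cons_self : a ∈ a :: t))
      simp only [List.map_cons, List.sum_cons, List.length_cons]
      push_cast
      linarith
  intro l
  induction l with
  | nil => rintro - ⟨x, hx, -⟩; exact absurd hx (List.not_mem_nil)
  | cons a t ih =>
    rintro h ⟨x, hx, hxK⟩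
    simp only [List.map_cons, List.sum_cons, List.length_cons]
    push_cast
    rcases List.mem_cons.1 hx with rfl | hxt
    · have := hge t (fun y hy => h y (List.mem_cons_of_mem x hy))
      have ht : (0:ℚ) ≤ t.length * S := by positivity
      rw [hxK]; linarith
    · have := ih (fun y hy => h y (List.mem_cons_of_mem a hy)) ⟨x, hxt, hxK⟩
      have ha := h a ((List.mem_cons_self : a ∈ a :: t))
      linarith

theorem sum_ell_eq (W : U → V → ℚ) (BU : U → ℤ) (BV : V → ℤ) (M : Finset (U × V)) :
    ∀ (l : List (Option (U ⊕ V) × Option (U ⊕ V))),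
      (∀ a ∈ l, ell W BU BV M a.1 a.2 ≠ Kc W) →
      (l.map fun a => ell W BU BV M a.1 a.2).sum
        = ((l.filterMap fR).map fun e => W e.1 e.2).sum
          - ((l.filterMap fA).map fun e => W e.1 e.2).sum := by
  intro l
  induction l with
  | nil => simp
  | cons a t ih =>
    intro h
    have hK := h a ((List.mem_cons_self : a ∈ a :: t))
    have ht := ih (fun b hb => h b (List.mem_cons_of_mem a hb))
    obtain ⟨a1, a2⟩ := a
    rcases a1 with _ | (u | v) <;> rcases a2 with _ | (u' | v')
    all_goals
      simp only [ell_nn, ell_nu, ell_nv, ell_un, ell_vn, ell_uv, ell_vu, ell_uu, ell_vv,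
        fA, fR, List.filterMap_cons, List.map_cons, List.sum_cons] at hK ⊢
    all_goals try split_ifs at hK ⊢
    all_goals
      first
        | (exact absurd rfl hK)
        | (rw [ht]; ring)
        | (simp only [List.map_cons, List.sum_cons]; rw [ht]; ring)

def totalW (W : U → V → ℚ) (M : Finset (U × V)) : ℚ := ∑ e ∈ M, W e.1 e.2

theorem cycle_nonneg (W : U → V → ℚ) (BU : U → ℤ) (BV : V → ℤ) (M : Finset (U × V))
    (hW : ∀ u v, 0 ≤ W u v) (hM : IsBMatching BU BV M)
    (hopt : ∀ M', IsBMatching BU BV M' → totalW W M' ≤ totalW W M)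
    (s : Option (U ⊕ V)) (L : List (Option (U ⊕ V))) (hnd : (s :: L).Nodup) :
    0 ≤ wcost (ell W BU BV M) s (L ++ [s]) := by
  classical
  set ℓ := ell W BU BV M with hℓ
  set arcs := arcsOf s (L ++ [s]) with harcs
  have hsum : wcost ℓ s (L ++ [s]) = (arcs.map fun a => ℓ a.1 a.2).sum :=
    wcost_eq_sum_arcs ℓ s (L ++ [s])
  have hfst : arcs.map Prod.fst = s :: L := by
    rw [harcs, map_fst_arcsOf]
    rw [show s :: (L ++ [s]) = (s :: L) ++ [s] by simp, List.dropLast_concat]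
  have hsnd : arcs.map Prod.snd = L ++ [s] := map_snd_arcsOf s (L ++ [s])
  have hndf : (arcs.map Prod.fst).Nodup := hfst ▸ hnd
  have hnds : (arcs.map Prod.snd).Nodup := by
    rw [hsnd]
    exact ((List.perm_append_singleton s L).nodup_iff).2 hnd
  have hndarcs : arcs.Nodup := hndf.of_map Prod.fst
  rw [hsum]
  rcases Classical.em (∀ a ∈ arcs, ℓ a.1 a.2 ≠ Kc W) with hK | hK
  swap
  · -- some arc has huge length
    push_neg at hK
    have hlen : (arcs.length : ℚ) ≤ (Fintype.card (Option (U ⊕ V)) : ℚ) := by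
      have h1 : arcs.length = (s :: L).length := by
        rw [← hfst, List.length_map]
      have h2 := hnd.length_le_card
      rw [h1]
      exact_mod_cast h2
    have hlb := sum_lb (fun a => ℓ a.1 a.2) (Sw W) (Kc W) (Sw_nonneg W hW) arcs
      (fun x _ => ell_lb W BU BV M hW x.1 x.2) hK
    have hS := Sw_nonneg W hW
    have : (arcs.length : ℚ) * Sw W ≤ (Fintype.card (Option (U ⊕ V)) : ℚ) * Sw W :=
      mul_le_mul_of_nonneg_right hlen hS
    have hKc : Kc W = (Fintype.card (Option (U ⊕ V)) + 1) * Sw W + 1 := rfl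
    nlinarith
  · -- genuine alternating cycle: exchange argument
    set addl := arcs.filterMap fA with haddl
    set reml := arcs.filterMap fR with hreml
    have hcost : (arcs.map fun a => ℓ a.1 a.2).sum
        = (reml.map fun e => W e.1 e.2).sum - (addl.map fun e => W e.1 e.2).sum :=
      sum_ell_eq W BU BV M arcs hK
    have haddnd : addl.Nodup := hndarcs.filterMap
      (fun a a' b hb hb' => by
        rw [Option.mem_def, fA_eq_some] at hb hb'; rw [hb, hb'])
    have hremnd : reml.Nodup := hndarcs.filterMap
      (fun a a' b hb hb' => by
        rw [Option.mem_def, fR_eq_some] at hb hb'; rw [hb, hb'])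
    have hmemA : ∀ e : U × V, e ∈ addl ↔ (some (Sum.inl e.1), some (Sum.inr e.2)) ∈ arcs := by
      intro e
      rw [haddl, List.mem_filterMap]
      constructor
      · rintro ⟨a, ha, hfa⟩; rwa [← fA_eq_some.1 hfa]
      · intro h; exact ⟨_, h, fA_eq_some.2 rfl⟩
    have hmemR : ∀ e : U × V, e ∈ reml ↔ (some (Sum.inr e.2), some (Sum.inl e.1)) ∈ arcs := by
      intro e
      rw [hreml, List.mem_filterMap]
      constructor
      · rintro ⟨a, ha, hfa⟩; rwa [← fR_eq_some.1 hfa]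
      · intro h; exact ⟨_, h, fR_eq_some.2 rfl⟩
    set Af := addl.toFinset with hAf
    set Rf := reml.toFinset with hRf
    have hAnotM : ∀ e ∈ Af, e ∉ M := by
      intro e he hem
      rw [hAf, List.mem_toFinset, hmemA] at he
      have := hK _ he
      rw [hℓ, ell_uv] at this
      simp [hem] at this
    have hRinM : Rf ⊆ M := by
      intro e he
      rw [hRf, List.mem_toFinset, hmemR] at he
      have := hK _ he
      rw [hℓ, ell_vu] at this
      by_contra hem
      simp [hem] at this
    set M' := (M \ Rf) ∪ Af with hM'
    have hdisj : Disjoint (M \ Rf) Af := by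
      rw [Finset.disjoint_right]
      intro e he hem
      exact hAnotM e he (Finset.mem_sdiff.1 hem).1
    have htot : totalW W M' = totalW W M - (reml.map fun e => W e.1 e.2).sum
        + (addl.map fun e => W e.1 e.2).sum := by
      rw [hM', totalW, Finset.sum_union hdisj,
        Finset.sum_sdiff_eq_sub hRinM]
      rw [← List.sum_toFinset _ hremnd, ← List.sum_toFinset _ haddnd]
      rfl
    -- degree bounds for M'
    have hMatch' : IsBMatching BU BV M' := by
      constructor
      · intro u
        have hfil : M'.filter (fun e => e.1 = u)
            = ((M.filter (fun e => e.1 = u)) \ (Rf.filter (fun e => e.1 = u)))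
              ∪ (Af.filter (fun e => e.1 = u)) := by
          ext e
          simp only [hM', Finset.mem_filter, Finset.mem_union, Finset.mem_sdiff]
          tauto
        have hacard : (Af.filter (fun e => e.1 = u)).card ≤ 1 := by
          rw [Finset.card_le_one]
          intro e1 he1 e2 he2
          rw [Finset.mem_filter] at he1 he2
          obtain ⟨he1m, he1u⟩ := he1
          obtain ⟨he2m, he2u⟩ := he2
          rw [hAf, List.mem_toFinset, hmemA] at he1m he2m
          have := List.inj_on_of_nodup_map hndf he1m he2m (by rw [he1u, he2u])
          have h2 := congrArg Prod.snd this
          simp only at h2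
          rw [Option.some_inj] at h2
          have := Sum.inr_injective h2
          exact Prod.ext (he1u.trans he2u.symm) this
        have hrcard : (Rf.filter (fun e => e.1 = u)).card ≤ 1 := by
          rw [Finset.card_le_one]
          intro e1 he1 e2 he2
          rw [Finset.mem_filter] at he1 he2
          obtain ⟨he1m, he1u⟩ := he1
          obtain ⟨he2m, he2u⟩ := he2
          rw [hRf, List.mem_toFinset, hmemR] at he1m he2m
          have := List.inj_on_of_nodup_map hnds he1m he2m (by rw [he1u, he2u])
          have h2 := congrArg Prod.fst this
          simp only at h2
          rw [Option.some_inj] at h2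
          have := Sum.inr_injective h2
          exact Prod.ext (he1u.trans he2u.symm) this
        have hkey : 1 ≤ (Af.filter (fun e => e.1 = u)).card →
            (Rf.filter (fun e => e.1 = u)).card = 0 → degU M u < BU u := by
          intro ha hr
          obtain ⟨e, he⟩ := Finset.card_pos.1 (lt_of_lt_of_le zero_lt_one ha)
          rw [Finset.mem_filter] at he
          obtain ⟨hem, heu⟩ := he
          rw [hAf, List.mem_toFinset, hmemA] at hem
          rw [heu] at hem
          -- the node `some (inl u)` occurs in the cycle, so it has an in-arc
          have hinfst : (some (Sum.inl u) : Option (U ⊕ V)) ∈ arcs.map Prod.fst :=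
            List.mem_map.2 ⟨_, hem, rfl⟩
          have hinsnd : (some (Sum.inl u) : Option (U ⊕ V)) ∈ arcs.map Prod.snd := by
            rw [hsnd]
            rw [hfst] at hinfst
            exact ((List.perm_append_singleton s L).mem_iff).2 hinfst
          obtain ⟨b, hbarcs, hb2⟩ := List.mem_map.1 hinsnd
          have hKb := hK b hbarcs
          obtain ⟨b1, b2⟩ := b
          simp only at hb2
          subst hb2
          rcases b1 with _ | (u' | v')
          · -- in-arc from ground: u must be unsaturated
            rw [hℓ, ell_nu] at hKb
            by_contra hlt
            simp [hlt] at hKb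
          · -- in-arc from a `U`-node: impossible
            rw [hℓ, ell_uu] at hKb
            have hu' : u' = u := by by_contra hne; simp [hne] at hKb
            subst hu'
            have := List.inj_on_of_nodup_map hndf hbarcs hem (by simp)
            have h2 := congrArg Prod.snd this
            simp at h2
          · -- in-arc from a `V`-node: it is a removed edge at u
            rw [hℓ, ell_vu] at hKb
            have hmem : (u, v') ∈ M := by by_contra hne; simp [hne] at hKb
            have : (u, v') ∈ Rf.filter (fun e => e.1 = u) := by
              rw [Finset.mem_filter, hRf, List.mem_toFinset, hmemR]
              exact ⟨hbarcs, rfl⟩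
            rw [Finset.card_eq_zero] at hr
            rw [hr] at this
            exact absurd this (Finset.notMem_empty _)
        -- arithmetic
        have hsub : Rf.filter (fun e => e.1 = u) ⊆ M.filter (fun e => e.1 = u) :=
          Finset.filter_subset_filter _ hRinM
        have hdisj2 : Disjoint ((M.filter (fun e => e.1 = u)) \ (Rf.filter (fun e => e.1 = u)))
            (Af.filter (fun e => e.1 = u)) := by
          rw [Finset.disjoint_right]
          intro e he hem
          rw [Finset.mem_filter] at he
          exact hAnotM e he.1 (Finset.mem_filter.1 (Finset.mem_sdiff.1 hem).1).1
        have hcard : (M'.filter (fun e => e.1 = u)).card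
            = ((M.filter (fun e => e.1 = u)).card - (Rf.filter (fun e => e.1 = u)).card)
              + (Af.filter (fun e => e.1 = u)).card := by
          rw [hfil, Finset.card_union_of_disjoint hdisj2, Finset.card_sdiff_of_subset hsub]
        have hBu := hM.1 u
        have hrc := Finset.card_le_card hsub
        have hdeg : degU M u = ((M.filter (fun e => e.1 = u)).card : ℤ) := rfl
        rw [hcard]
        by_cases ha0 : (Af.filter (fun e => e.1 = u)).card = 0
        · rw [ha0]; push_cast; omega
        · have ha1 : 1 ≤ (Af.filter (fun e => e.1 = u)).card := Nat.one_le_iff_ne_zero.2 ha0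
          by_cases hr0 : (Rf.filter (fun e => e.1 = u)).card = 0
          · have := hkey ha1 hr0
            rw [hdeg] at this
            push_cast
            omega
          · have hr1 : 1 ≤ (Rf.filter (fun e => e.1 = u)).card := Nat.one_le_iff_ne_zero.2 hr0
            push_cast
            omega
      · intro v
        have hfil : M'.filter (fun e => e.2 = v)
            = ((M.filter (fun e => e.2 = v)) \ (Rf.filter (fun e => e.2 = v)))
              ∪ (Af.filter (fun e => e.2 = v)) := by
          ext e
          simp only [hM', Finset.mem_filter, Finset.mem_union, Finset.mem_sdiff]
          tauto
        have hacard : (Af.filter (fun e => e.2 = v)).card ≤ 1 := by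
          rw [Finset.card_le_one]
          intro e1 he1 e2 he2
          rw [Finset.mem_filter] at he1 he2
          obtain ⟨he1m, he1u⟩ := he1
          obtain ⟨he2m, he2u⟩ := he2
          rw [hAf, List.mem_toFinset, hmemA] at he1m he2m
          have := List.inj_on_of_nodup_map hnds he1m he2m (by rw [he1u, he2u])
          have h2 := congrArg Prod.fst this
          simp only at h2
          rw [Option.some_inj] at h2
          have := Sum.inl_injective h2
          exact Prod.ext this (he1u.trans he2u.symm)
        have hrcard : (Rf.filter (fun e => e.2 = v)).card ≤ 1 := by
          rw [Finset.card_le_one]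
          intro e1 he1 e2 he2
          rw [Finset.mem_filter] at he1 he2
          obtain ⟨he1m, he1u⟩ := he1
          obtain ⟨he2m, he2u⟩ := he2
          rw [hRf, List.mem_toFinset, hmemR] at he1m he2m
          have := List.inj_on_of_nodup_map hndf he1m he2m (by rw [he1u, he2u])
          have h2 := congrArg Prod.snd this
          simp only at h2
          rw [Option.some_inj] at h2
          have := Sum.inl_injective h2
          exact Prod.ext this (he1u.trans he2u.symm)
        have hkey : 1 ≤ (Af.filter (fun e => e.2 = v)).card →
            (Rf.filter (fun e => e.2 = v)).card = 0 → degV M v < BV v := by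
          intro ha hr
          obtain ⟨e, he⟩ := Finset.card_pos.1 (lt_of_lt_of_le zero_lt_one ha)
          rw [Finset.mem_filter] at he
          obtain ⟨hem, heu⟩ := he
          rw [hAf, List.mem_toFinset, hmemA] at hem
          rw [heu] at hem
          -- the node `some (inr v)` occurs in the cycle, so it has an out-arc
          have hinsnd : (some (Sum.inr v) : Option (U ⊕ V)) ∈ arcs.map Prod.snd :=
            List.mem_map.2 ⟨_, hem, rfl⟩
          have hinfst : (some (Sum.inr v) : Option (U ⊕ V)) ∈ arcs.map Prod.fst := by
            rw [hfst]
            rw [hsnd] at hinsnd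
            exact ((List.perm_append_singleton s L).mem_iff).1 hinsnd
          obtain ⟨b, hbarcs, hb1⟩ := List.mem_map.1 hinfst
          have hKb := hK b hbarcs
          obtain ⟨b1, b2⟩ := b
          simp only at hb1
          subst hb1
          rcases b2 with _ | (u'' | v'')
          · -- out-arc to ground: v must be unsaturated
            rw [hℓ, ell_vn] at hKb
            by_contra hlt
            simp [hlt] at hKb
          · -- out-arc to a `U`-node: it is a removed edge at v
            rw [hℓ, ell_vu] at hKb
            have hmem : (u'', v) ∈ M := by by_contra hne; simp [hne] at hKb
            have : (u'', v) ∈ Rf.filter (fun e => e.2 = v) := by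
              rw [Finset.mem_filter, hRf, List.mem_toFinset, hmemR]
              exact ⟨hbarcs, rfl⟩
            rw [Finset.card_eq_zero] at hr
            rw [hr] at this
            exact absurd this (Finset.notMem_empty _)
          · -- out-arc to a `V`-node: impossible
            rw [hℓ, ell_vv] at hKb
            have hv'' : v = v'' := by by_contra hne; simp [hne] at hKb
            subst hv''
            have := List.inj_on_of_nodup_map hnds hbarcs hem (by simp)
            have h2 := congrArg Prod.fst this
            simp at h2
        -- arithmetic
        have hsub : Rf.filter (fun e => e.2 = v) ⊆ M.filter (fun e => e.2 = v) :=
          Finset.filter_subset_filter _ hRinM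
        have hdisj2 : Disjoint ((M.filter (fun e => e.2 = v)) \ (Rf.filter (fun e => e.2 = v)))
            (Af.filter (fun e => e.2 = v)) := by
          rw [Finset.disjoint_right]
          intro e he hem
          rw [Finset.mem_filter] at he
          exact hAnotM e he.1 (Finset.mem_filter.1 (Finset.mem_sdiff.1 hem).1).1
        have hcard : (M'.filter (fun e => e.2 = v)).card
            = ((M.filter (fun e => e.2 = v)).card - (Rf.filter (fun e => e.2 = v)).card)
              + (Af.filter (fun e => e.2 = v)).card := by
          rw [hfil, Finset.card_union_of_disjoint hdisj2, Finset.card_sdiff_of_subset hsub]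
        have hBv := hM.2 v
        have hrc := Finset.card_le_card hsub
        have hdeg : degV M v = ((M.filter (fun e => e.2 = v)).card : ℤ) := rfl
        rw [hcard]
        by_cases ha0 : (Af.filter (fun e => e.2 = v)).card = 0
        · rw [ha0]; push_cast; omega
        · have ha1 : 1 ≤ (Af.filter (fun e => e.2 = v)).card := Nat.one_le_iff_ne_zero.2 ha0
          by_cases hr0 : (Rf.filter (fun e => e.2 = v)).card = 0
          · have := hkey ha1 hr0
            rw [hdeg] at this
            push_cast
            omega
          · have hr1 : 1 ≤ (Rf.filter (fun e => e.2 = v)).card := Nat.one_le_iff_ne_zero.2 hr0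
            push_cast
            omega
    have hle := hopt M' hMatch'
    rw [htot] at hle
    rw [hcost]
    linarith

theorem exists_pq (W : U → V → ℚ) (BU : U → ℤ) (BV : V → ℤ) (M : Finset (U × V))
    (hW : ∀ u v, 0 ≤ W u v) (hM : IsBMatching BU BV M)
    (hopt : ∀ M', IsBMatching BU BV M' → totalW W M' ≤ totalW W M) :
    ∃ (p : U → ℚ) (q : V → ℚ),
      (∀ u, 0 ≤ p u) ∧ (∀ v, 0 ≤ q v) ∧
      (∀ u, degU M u < BU u → p u = 0) ∧
      (∀ v, degV M v < BV v → q v = 0) ∧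
      (∀ u v, (u, v) ∉ M → W u v ≤ p u + q v) ∧
      (∀ u v, (u, v) ∈ M → p u + q v ≤ W u v) := by
  obtain ⟨d, hdg, hrel⟩ := exists_potential (ell W BU BV M) none
    (cycle_nonneg W BU BV M hW hM hopt)
  have hpnn : ∀ u : U, 0 ≤ d (some (Sum.inl u)) := by
    intro u
    have := hrel (some (Sum.inl u)) none
    rw [hdg, ell_un] at this
    linarith
  have hqnn : ∀ v : V, d (some (Sum.inr v)) ≤ 0 := by
    intro v
    have := hrel none (some (Sum.inr v))
    rw [hdg, ell_nv] at this
    linarith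
  refine ⟨fun u => d (some (Sum.inl u)), fun v => -d (some (Sum.inr v)),
    hpnn, fun v => by dsimp only; linarith [hqnn v], ?_, ?_, ?_, ?_⟩
  · intro u hu
    dsimp only
    have := hrel none (some (Sum.inl u))
    rw [hdg, ell_nu, if_pos hu] at this
    linarith [hpnn u]
  · intro v hv
    dsimp only
    have := hrel (some (Sum.inr v)) none
    rw [hdg, ell_vn, if_pos hv] at this
    have := hqnn v
    linarith
  · intro u v huv
    dsimp only
    have := hrel (some (Sum.inl u)) (some (Sum.inr v))
    rw [ell_uv, if_neg huv] at this
    linarith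
  · intro u v huv
    dsimp only
    have := hrel (some (Sum.inr v)) (some (Sum.inl u))
    rw [ell_vu, if_pos huv] at this
    linarith

section Assembly

variable (M : Finset (U × V))

/-- partners of `u`. -/
def Mpart (u : U) : Finset V := (M.filter fun e => e.1 = u).image Prod.snd

/-- partners of `v`. -/
def Npart (v : V) : Finset U := (M.filter fun e => e.2 = v).image Prod.fst

theorem mem_Mpart {u : U} {v : V} : v ∈ Mpart M u ↔ (u, v) ∈ M := by
  simp only [Mpart, Finset.mem_image, Finset.mem_filter]
  constructor
  · rintro ⟨e, ⟨heM, heu⟩, rfl⟩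
    have : e = (u, e.2) := by rw [Prod.ext_iff]; exact ⟨heu, rfl⟩
    rwa [this] at heM
  · intro h; exact ⟨(u, v), ⟨h, rfl⟩, rfl⟩

theorem mem_Npart {u : U} {v : V} : u ∈ Npart M v ↔ (u, v) ∈ M := by
  simp only [Npart, Finset.mem_image, Finset.mem_filter]
  constructor
  · rintro ⟨e, ⟨heM, hev⟩, rfl⟩
    have : e = (e.1, v) := by rw [Prod.ext_iff]; exact ⟨rfl, hev⟩
    rwa [this] at heM
  · intro h; exact ⟨(u, v), ⟨h, rfl⟩, rfl⟩

theorem card_Mpart (u : U) : (Mpart M u).card = (M.filter fun e => e.1 = u).card := by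
  apply Finset.card_image_of_injOn
  intro e1 he1 e2 he2 hsnd
  rw [Finset.mem_coe, Finset.mem_filter] at he1 he2
  exact Prod.ext (he1.2.trans he2.2.symm) hsnd

theorem card_Npart (v : V) : (Npart M v).card = (M.filter fun e => e.2 = v).card := by
  apply Finset.card_image_of_injOn
  intro e1 he1 e2 he2 hfst
  rw [Finset.mem_coe, Finset.mem_filter] at he1 he2
  exact Prod.ext hfst (he1.2.trans he2.2.symm)

/-- index of the copy of `u` matched to `v`. -/
noncomputable def idxU (u : U) (v : V) : ℤ :=
  if h : v ∈ Mpart M u then (((Mpart M u).equivFin ⟨v, h⟩ : Fin _) : ℕ) + 1 else 0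

/-- index of the copy of `v` matched to `u`. -/
noncomputable def idxV (v : V) (u : U) : ℤ :=
  if h : u ∈ Npart M v then (((Npart M v).equivFin ⟨u, h⟩ : Fin _) : ℕ) + 1 else 0

/-- the partner matched to the `j`-th copy of `v`, if any. -/
noncomputable def pposV (v : V) (j : ℤ) : Option U :=
  if h : 1 ≤ j ∧ (j - 1).toNat < (Npart M v).card then
    some (((Npart M v).equivFin.symm ⟨(j - 1).toNat, h.2⟩ : {x // x ∈ Npart M v}) : U)
  else none

theorem idxU_bounds {u : U} {v : V} (h : v ∈ Mpart M u) :
    1 ≤ idxU M u v ∧ idxU M u v ≤ ((Mpart M u).card : ℤ) := by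
  rw [idxU, dif_pos h]
  have := (((Mpart M u).equivFin ⟨v, h⟩ : Fin _)).isLt
  constructor
  · omega
  · exact_mod_cast Nat.succ_le_of_lt this

theorem idxV_bounds {u : U} {v : V} (h : u ∈ Npart M v) :
    1 ≤ idxV M v u ∧ idxV M v u ≤ ((Npart M v).card : ℤ) := by
  rw [idxV, dif_pos h]
  have := (((Npart M v).equivFin ⟨u, h⟩ : Fin _)).isLt
  constructor
  · omega
  · exact_mod_cast Nat.succ_le_of_lt this

theorem idxU_inj {u : U} {v v' : V} (h : v ∈ Mpart M u) (h' : v' ∈ Mpart M u)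
    (heq : idxU M u v = idxU M u v') : v = v' := by
  simp only [idxU] at heq
  rw [dif_pos h, dif_pos h'] at heq
  have hn : (((Mpart M u).equivFin ⟨v, h⟩ : Fin _) : ℕ)
      = (((Mpart M u).equivFin ⟨v', h'⟩ : Fin _) : ℕ) := by omega
  have := (Mpart M u).equivFin.injective (Fin.ext hn)
  exact Subtype.ext_iff.1 this

theorem idxV_inj {u u' : U} {v : V} (h : u ∈ Npart M v) (h' : u' ∈ Npart M v)
    (heq : idxV M v u = idxV M v u') : u = u' := by
  simp only [idxV] at heq
  rw [dif_pos h, dif_pos h'] at heq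
  have hn : (((Npart M v).equivFin ⟨u, h⟩ : Fin _) : ℕ)
      = (((Npart M v).equivFin ⟨u', h'⟩ : Fin _) : ℕ) := by omega
  have := (Npart M v).equivFin.injective (Fin.ext hn)
  exact Subtype.ext_iff.1 this

theorem idxU_surj {u : U} {i : ℤ} (h1 : 1 ≤ i) (h2 : i ≤ ((Mpart M u).card : ℤ)) :
    ∃ v ∈ Mpart M u, idxU M u v = i := by
  have hk : (i - 1).toNat < (Mpart M u).card := by omega
  set x := (Mpart M u).equivFin.symm ⟨(i - 1).toNat, hk⟩ with hx
  refine ⟨(x : V), x.2, ?_⟩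
  rw [idxU, dif_pos x.2]
  have : (⟨(x : V), x.2⟩ : {y // y ∈ Mpart M u}) = x := Subtype.coe_eta x x.2
  rw [this, hx, Equiv.apply_symm_apply]
  simp only
  omega

theorem pposV_idxV {u : U} {v : V} (h : u ∈ Npart M v) :
    pposV M v (idxV M v u) = some u := by
  have hb := idxV_bounds M h
  rw [idxV, dif_pos h] at hb ⊢
  have hcond : 1 ≤ ((((Npart M v).equivFin ⟨u, h⟩ : Fin _) : ℕ) : ℤ) + 1 ∧
      (((((Npart M v).equivFin ⟨u, h⟩ : Fin _) : ℕ) : ℤ) + 1 - 1).toNat < (Npart M v).card := by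
    constructor
    · omega
    · simp only [add_sub_cancel_right, Int.toNat_natCast]
      exact (((Npart M v).equivFin ⟨u, h⟩ : Fin _)).isLt
  rw [pposV, dif_pos hcond]
  congr 1
  have h2 : ((((((Npart M v).equivFin ⟨u, h⟩ : Fin _) : ℕ) : ℤ) + 1 - 1).toNat) =
      (((Npart M v).equivFin ⟨u, h⟩ : Fin _) : ℕ) := by
    simp only [add_sub_cancel_right, Int.toNat_natCast]
  have h3 : (⟨(((((Npart M v).equivFin ⟨u, h⟩ : Fin _) : ℕ) : ℤ) + 1 - 1).toNat, hcond.2⟩ : Fin (Npart M v).card)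
      = (Npart M v).equivFin ⟨u, h⟩ := Fin.ext h2
  rw [h3, Equiv.symm_apply_apply]

theorem pposV_mem {v : V} {j : ℤ} {u : U} (h : pposV M v j = some u) : u ∈ Npart M v := by
  rw [pposV] at h
  split_ifs at h with hc
  · rw [Option.some_inj] at h
    rw [← h]
    exact (((Npart M v).equivFin.symm ⟨(j - 1).toNat, hc.2⟩)).2

theorem pposV_surj {v : V} {j : ℤ} (h1 : 1 ≤ j) (h2 : j ≤ ((Npart M v).card : ℤ)) :
    ∃ u ∈ Npart M v, pposV M v j = some u ∧ idxV M v u = j := by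
  have hk : (j - 1).toNat < (Npart M v).card := by omega
  set x := (Npart M v).equivFin.symm ⟨(j - 1).toNat, hk⟩ with hx
  refine ⟨(x : U), x.2, ?_, ?_⟩
  · rw [pposV, dif_pos ⟨h1, hk⟩]
  · rw [idxV, dif_pos x.2]
    have : (⟨(x : U), x.2⟩ : {y // y ∈ Npart M v}) = x := Subtype.coe_eta x x.2
    rw [this, hx, Equiv.apply_symm_apply]
    simp only
    omega

end Assembly

end Exchange

end CopiesCore


variable {U V : Type*} [Fintype U] [Fintype V] [Nonempty U] [Nonempty V]
  [DecidableEq U] [DecidableEq V]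

/-- A copies-core solution always exists. -/
theorem exists_copiesCore (W : U → V → ℚ) (hW : ∀ u v, 0 ≤ W u v)
    (BU : U → ℤ) (BV : V → ℤ) (hBU : ∀ u, 1 ≤ BU u) (hBV : ∀ v, 1 ≤ BV v) :
    ∃ (aU : U → ℤ → ℚ) (aV : V → ℤ → ℚ) (𝓜 : Finset ((U × ℤ) × (V × ℤ))),
      IsCopiesCore W BU BV aU aV 𝓜 := by
  classical
  open CopiesCore in
  -- an optimal B-matching
  have hne : ((Finset.univ : Finset (Finset (U × V))).filter
      (fun M => IsBMatching BU BV M)).Nonempty := by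
    refine ⟨∅, Finset.mem_filter.2 ⟨Finset.mem_univ _, ?_, ?_⟩⟩
    · intro u; simp only [Finset.filter_empty, Finset.card_empty, Nat.cast_zero]
      linarith [hBU u]
    · intro v; simp only [Finset.filter_empty, Finset.card_empty, Nat.cast_zero]
      linarith [hBV v]
  obtain ⟨M, hMmem, hmax⟩ := Finset.exists_max_image _ (totalW W) hne
  have hM : IsBMatching BU BV M := (Finset.mem_filter.1 hMmem).2
  have hopt : ∀ M', IsBMatching BU BV M' → totalW W M' ≤ totalW W M :=
    fun M' h => hmax M' (Finset.mem_filter.2 ⟨Finset.mem_univ _, h⟩)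
  obtain ⟨p, q, hp0, hq0, hpu, hqv, hoff, hon⟩ := exists_pq W BU BV M hW hM hopt
  have hcardU : ∀ u, ((Mpart M u).card : ℤ) = degU M u := by
    intro u; rw [card_Mpart]; rfl
  have hcardV : ∀ v, ((Npart M v).card : ℤ) = degV M v := by
    intro v; rw [card_Npart]; rfl
  have hdegBU : ∀ u, degU M u ≤ BU u := hM.1
  have hdegBV : ∀ v, degV M v ≤ BV v := hM.2
  refine ⟨fun u i => if 1 ≤ i ∧ i ≤ degU M u then p u else 0,
    fun v j => (pposV M v j).elim 0 (fun u0 => W u0 v - p u0),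
    M.image (fun e => ((e.1, idxU M e.1 e.2), (e.2, idxV M e.2 e.1))),
    ?_, ?_, ?_, ?_, ?_⟩
  · -- IsBCopiesMatching
    refine ⟨?_, ?_, ?_, ?_⟩
    · intro e he
      rw [Finset.mem_image] at he
      obtain ⟨f, hf, rfl⟩ := he
      have hmu : f.2 ∈ Mpart M f.1 := (mem_Mpart M).2 (by rwa [Prod.mk.eta])
      have hnv : f.1 ∈ Npart M f.2 := (mem_Npart M).2 (by rwa [Prod.mk.eta])
      have h1 := idxU_bounds M hmu
      have h2 := idxV_bounds M hnv
      have hc1 := hcardU f.1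
      have hc2 := hcardV f.2
      have hb1 := hdegBU f.1
      have hb2 := hdegBV f.2
      exact ⟨h1.1, by dsimp only; omega, h2.1, by dsimp only; omega⟩
    · intro e he f hf h1
      rw [Finset.mem_image] at he hf
      obtain ⟨e', he', rfl⟩ := he
      obtain ⟨f', hf', rfl⟩ := hf
      simp only [Prod.mk.injEq] at h1
      obtain ⟨h11, h12⟩ := h1
      rw [← h11] at h12
      have hmu1 : e'.2 ∈ Mpart M e'.1 := (mem_Mpart M).2 (by rwa [Prod.mk.eta])
      have hmu2 : f'.2 ∈ Mpart M e'.1 := by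
        rw [h11]; exact (mem_Mpart M).2 (by rwa [Prod.mk.eta])
      have hv := idxU_inj M hmu1 hmu2 h12
      have : e' = f' := Prod.ext h11 hv
      rw [this]
    · intro e he f hf h1
      rw [Finset.mem_image] at he hf
      obtain ⟨e', he', rfl⟩ := he
      obtain ⟨f', hf', rfl⟩ := hf
      simp only [Prod.mk.injEq] at h1
      obtain ⟨h11, h12⟩ := h1
      rw [← h11] at h12
      have hnv1 : e'.1 ∈ Npart M e'.2 := (mem_Npart M).2 (by rwa [Prod.mk.eta])
      have hnv2 : f'.1 ∈ Npart M e'.2 := by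
        rw [h11]; exact (mem_Npart M).2 (by rwa [Prod.mk.eta])
      have hu := idxV_inj M hnv1 hnv2 h12
      have : e' = f' := Prod.ext hu h11
      rw [this]
    · intro e he f hf h1 h2
      rw [Finset.mem_image] at he hf
      obtain ⟨e', he', rfl⟩ := he
      obtain ⟨f', hf', rfl⟩ := hf
      simp only at h1 h2
      have : e' = f' := Prod.ext h1 h2
      rw [this]
  · -- AllocNonneg
    constructor
    · intro u i h1 h2
      dsimp only
      split_ifs
      · exact hp0 u
      · exact le_refl 0
    · intro v j h1 h2
      dsimp only
      cases hpp : pposV M v j with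
      | none => simp
      | some u0 =>
        simp only [Option.elim_some]
        have hu0 : (u0, v) ∈ M := (mem_Npart M).1 (pposV_mem M hpp)
        have := hon u0 v hu0
        have := hq0 v
        linarith
  · -- EdgeSaturation
    intro e he
    rw [Finset.mem_image] at he
    obtain ⟨f, hf, rfl⟩ := he
    dsimp only
    have hmu : f.2 ∈ Mpart M f.1 := (mem_Mpart M).2 (by rwa [Prod.mk.eta])
    have hnv : f.1 ∈ Npart M f.2 := (mem_Npart M).2 (by rwa [Prod.mk.eta])
    have h1 := idxU_bounds M hmu
    have hc1 := hcardU f.1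
    rw [if_pos ⟨h1.1, by omega⟩, pposV_idxV M hnv]
    simp only [Option.elim_some]
    ring
  · -- PairwiseStability
    intro u v hnm i j h1i h2i h1j h2j
    have hreduce : reduceMatching
        (M.image (fun e => ((e.1, idxU M e.1 e.2), (e.2, idxV M e.2 e.1)))) = M := by
      rw [reduceMatching, Finset.image_image]
      ext e
      simp only [Finset.mem_image, Function.comp_apply]
      constructor
      · rintro ⟨f, hfm, rfl⟩; simpa using hfm
      · intro hem; exact ⟨e, hem, rfl⟩
    rw [hreduce] at hnm
    dsimp only
    have haUi : (if 1 ≤ i ∧ i ≤ degU M u then p u else 0) = p u := by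
      split_ifs with hc
      · rfl
      · have : degU M u < BU u := by omega
        rw [hpu u this]
    have haVj : q v ≤ (pposV M v j).elim 0 (fun u0 => W u0 v - p u0) := by
      cases hpp : pposV M v j with
      | none =>
        simp only [Option.elim_none]
        rw [pposV] at hpp
        split_ifs at hpp with hc
        have hc2 : ¬((j - 1).toNat < (Npart M v).card) := fun hlt => hc ⟨h1j, hlt⟩
        have hcv := hcardV v
        have hbv := hdegBV v
        have : degV M v < BV v := by omega
        rw [hqv v this]
      | some u0 =>
        simp only [Option.elim_some]
        have hu0 : (u0, v) ∈ M := (mem_Npart M).1 (pposV_mem M hpp)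
        linarith [hon u0 v hu0]
    have := hoff u v hnm
    linarith
  · -- ZeroGain
    constructor
    · intro u i h1 h2 hno
      dsimp only
      by_cases hc : i ≤ degU M u
      · exfalso
        have hcu := hcardU u
        obtain ⟨v, hvmem, hidx⟩ := idxU_surj M (u := u) h1 (by omega)
        have hvM : (u, v) ∈ M := (mem_Mpart M).1 hvmem
        have hmem : ((u, idxU M u v), (v, idxV M v u)) ∈
            M.image (fun e => ((e.1, idxU M e.1 e.2), (e.2, idxV M e.2 e.1))) :=
          Finset.mem_image_of_mem _ hvM
        exact hno _ hmem (by rw [hidx])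
      · rw [if_neg (fun hco => hc hco.2)]
    · intro v j h1 h2 hno
      dsimp only
      cases hpp : pposV M v j with
      | none => simp
      | some u0 =>
        exfalso
        have hcv := hcardV v
        have hppc := hpp
        rw [pposV] at hppc
        split_ifs at hppc with hc
        obtain ⟨u1, hu1mem, hu1some, hu1idx⟩ := pposV_surj M (v := v) h1 (by omega)
        have hu10 : u1 = u0 := Option.some_inj.1 (hu1some.symm.trans hpp)
        subst hu10
        have hvM : (u1, v) ∈ M := (mem_Npart M).1 hu1mem
        have hmem : ((u1, idxU M u1 v), (v, idxV M v u1)) ∈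
            M.image (fun e => ((e.1, idxU M e.1 e.2), (e.2, idxV M e.2 e.1))) :=
          Finset.mem_image_of_mem _ hvM
        exact hno _ hmem (by rw [hu1idx])
end
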